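/- arXiv:2302.00037 — 6 statements merged into one kernel-verified Lean document; each statement's English description precedes it below -/
import Mathlib

section
/- For any weighted graph G on V with |V| = n ≥ 3 and any binary tree T with leaf set V, if (A,B) is the balanced cut of T, then ω_G(T) ≥ (2n/3)·w(A,B). -/
open Finset

inductive BTree (V : Type) : Type
  | leaf : V → BTree V
  | node : BTree V → BTree V → BTree V
  deriving DecidableEq

namespace BTree

variable {V : Type} [DecidableEq V]

def leavesList : BTree V → List V
  | leaf x => [x]
  | node L R => L.leavesList ++ R.leavesList

def leaves (T : BTree V) : Finset V :=
  T.leavesList.toFinset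

def cluster : BTree V → V → V → Finset V
  | leaf x, _, _ => {x}
  | node L R, u, v =>
    if u ∈ L.leaves ∧ v ∈ L.leaves then L.cluster u v
    else if u ∈ R.leaves ∧ v ∈ R.leaves then R.cluster u v
    else (node L R).leaves

end BTree

section
variable {V : Type} [Fintype V] [DecidableEq V]

def IsHC (T : BTree V) : Prop :=
  T.leavesList.Nodup ∧ T.leaves = Finset.univ

def IsWeight (w : V → V → ℝ) : Prop :=
  (∀ u v, 0 ≤ w u v) ∧ (∀ u v, w u v = w v u) ∧ ∀ u, w u u = 0

noncomputable def cost (w : V → V → ℝ) (T : BTree V) : ℝ :=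
  (1 / 2) * ∑ u : V, ∑ v : V, w u v * ((T.cluster u v).card : ℝ)

noncomputable def optCost (w : V → V → ℝ) : ℝ :=
  sInf {c : ℝ | ∃ T : BTree V, IsHC T ∧ cost w T = c}

noncomputable def graphDist (w w' : V → V → ℝ) : ℝ :=
  (1 / 2) * ∑ u : V, ∑ v : V, |w u v - w' u v|

noncomputable def cutW (w : V → V → ℝ) (A B : Finset V) : ℝ :=
  ∑ a ∈ A, ∑ b ∈ B, w a b

def IsEdgeDP (A : (V → V → ℝ) → PMF (BTree V)) (ε : ℝ) : Prop :=
  ∀ w w' : V → V → ℝ, IsWeight w → IsWeight w' → graphDist w w' ≤ 1 →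
    ∀ S : Set (BTree V),
      (A w').toOuterMeasure S ≤ ENNReal.ofReal (Real.exp ε) * (A w).toOuterMeasure S

end

/-- The node reached by starting at the root and repeatedly descending to the child with more
leaves in its subtree, stopping at the first node whose subtree has fewer than `2n/3` leaves.
Its leaf set is the first part of the balanced cut of the tree. -/
def bsub {V : Type} [DecidableEq V] (n : ℕ) : BTree V → BTree V
  | .leaf x => .leaf x
  | .node L R =>
    if 3 * (BTree.node L R).leaves.card < 2 * n then .node L R
    else if R.leaves.card ≤ L.leaves.card then bsub n L else bsub n R

namespace BTree

variable {V : Type} [DecidableEq V]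

lemma leaves_node (L R : BTree V) : (node L R).leaves = L.leaves ∪ R.leaves := by
  simp [leaves, leavesList]

lemma disjoint_leaves_of_nodup_node {L R : BTree V} (h : (node L R).leavesList.Nodup) :
    Disjoint L.leaves R.leaves :=
  List.disjoint_toFinset_iff_disjoint.mpr (List.disjoint_of_nodup_append h)

lemma cluster_comm (T : BTree V) (u v : V) : T.cluster u v = T.cluster v u := by
  induction T with
  | leaf x => rfl
  | node L R ihL ihR =>
    simp only [cluster, ihL, ihR, and_comm]

lemma cluster_node_of_mem_child {L R C : BTree V} (hLR : Disjoint L.leaves R.leaves)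
    (hC : C = L ∨ C = R) {u : V} (hu : u ∈ C.leaves) (v : V) :
    (node L R).cluster u v = if v ∈ C.leaves then C.cluster u v else (node L R).leaves := by
  rcases hC with rfl | rfl
  · have huR : u ∉ R.leaves := Finset.disjoint_left.mp hLR hu
    by_cases hv : v ∈ C.leaves <;> simp [cluster, hu, huR, hv]
  · have huL : u ∉ L.leaves := Finset.disjoint_right.mp hLR hu
    by_cases hv : v ∈ C.leaves <;> simp [cluster, hu, huL, hv]

end BTree

open BTree

section

variable {V : Type} [DecidableEq V]

lemma leaves_bsub_subset (n : ℕ) (T : BTree V) : (bsub n T).leaves ⊆ T.leaves := by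
  induction T with
  | leaf x => simp [bsub]
  | node L R ihL ihR =>
    rw [bsub, leaves_node]
    split_ifs
    · rw [leaves_node]
    · exact ihL.trans subset_union_left
    · exact ihR.trans subset_union_right

/-- Every pair separated by the balanced cut has its lowest common ancestor at or above the parent
of `bsub n T`, which has at least `2n/3` leaves since the descent did not stop there. -/
lemma two_mul_le_three_mul_card_cluster_of_mem_bsub (n : ℕ) {T : BTree V}
    (hT : T.leavesList.Nodup) {u v : V} (hu : u ∈ (bsub n T).leaves)
    (hv : v ∈ T.leaves \ (bsub n T).leaves) : 2 * n ≤ 3 * #(T.cluster u v) := by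
  induction T with
  | leaf x => simp [bsub] at hv
  | node L R ihL ihR =>
    by_cases hsmall : 3 * #(node L R).leaves < 2 * n
    · simp [bsub, hsmall] at hv
    set C := if #R.leaves ≤ #L.leaves then L else R
    have hC : C = L ∨ C = R := by unfold C; split_ifs <;> simp
    have hbsub : bsub n (node L R) = bsub n C := by
      rw [bsub, if_neg hsmall]; exact (apply_ite (bsub n) _ _ _).symm
    rw [hbsub] at hu hv
    rw [cluster_node_of_mem_child (disjoint_leaves_of_nodup_node hT) hC
      (leaves_bsub_subset n C hu)]
    split_ifs with hvC
    · rcases hC with hCL | hCR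
      · rw [hCL] at hu hv hvC ⊢
        exact ihL (List.Nodup.of_append_left hT) hu (mem_sdiff.mpr ⟨hvC, (mem_sdiff.mp hv).2⟩)
      · rw [hCR] at hu hv hvC ⊢
        exact ihR (List.Nodup.of_append_right hT) hu (mem_sdiff.mpr ⟨hvC, (mem_sdiff.mp hv).2⟩)
    · omega

end

lemma two_nsmul_sum_sum_compl_le {ι M : Type*} [Fintype ι] [DecidableEq ι] [AddCommMonoid M]
    [PartialOrder M] [IsOrderedAddMonoid M] {f : ι → ι → M} (hf : ∀ i j, 0 ≤ f i j)
    (hsymm : ∀ i j, f i j = f j i) (s : Finset ι) :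
    2 • ∑ i ∈ s, ∑ j ∈ sᶜ, f i j ≤ ∑ i, ∑ j, f i j := by
  have hswap : ∑ i ∈ s, ∑ j ∈ sᶜ, f i j = ∑ i ∈ sᶜ, ∑ j ∈ s, f i j := by
    rw [sum_comm]; simp only [hsymm]
  have hinner : ∀ t u : Finset ι, ∑ i ∈ t, ∑ j ∈ u, f i j ≤ ∑ i ∈ t, ∑ j, f i j := fun t u =>
    sum_le_sum fun i _ => sum_le_sum_of_subset_of_nonneg (subset_univ u) fun j _ _ => hf i j
  calc 2 • ∑ i ∈ s, ∑ j ∈ sᶜ, f i j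
      = ∑ i ∈ s, ∑ j ∈ sᶜ, f i j + ∑ i ∈ sᶜ, ∑ j ∈ s, f i j := by rw [two_nsmul, ← hswap]
    _ ≤ ∑ i ∈ s, ∑ j, f i j + ∑ i ∈ sᶜ, ∑ j, f i j := add_le_add (hinner _ _) (hinner _ _)
    _ = ∑ i, ∑ j, f i j := sum_add_sum_compl s _

theorem cost_ge_balanced_cut_general (V : Type) [Fintype V] [DecidableEq V] (n : ℕ)
    (w : V → V → ℝ) (hw : IsWeight w)
    (T : BTree V) (hT : IsHC T) :
    2 * (n : ℝ) / 3 * cutW w (bsub n T).leaves ((bsub n T).leaves)ᶜ ≤ cost w T := by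
  obtain ⟨hw0, hwsymm, -⟩ := hw
  set A := (bsub n T).leaves
  have hpair : ∀ a ∈ A, ∀ b ∈ Aᶜ, 2 * (n : ℝ) / 3 * w a b ≤ w a b * #(T.cluster a b) := by
    intro a ha b hb
    have hv : b ∈ T.leaves \ A := by simpa [hT.2] using hb
    have hcard : (2 * n : ℝ) ≤ 3 * #(T.cluster a b) := by
      exact_mod_cast two_mul_le_three_mul_card_cluster_of_mem_bsub n hT.1 ha hv
    nlinarith [hw0 a b]
  have htotal := two_nsmul_sum_sum_compl_le
    (f := fun u v => w u v * #(T.cluster u v))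
    (fun u v => mul_nonneg (hw0 u v) (Nat.cast_nonneg _))
    (fun u v => by rw [hwsymm, cluster_comm]) A
  calc 2 * (n : ℝ) / 3 * cutW w A Aᶜ
      ≤ ∑ a ∈ A, ∑ b ∈ Aᶜ, w a b * #(T.cluster a b) := by
        rw [cutW, mul_sum]
        exact sum_le_sum fun a ha => by rw [mul_sum]; exact sum_le_sum (hpair a ha)
    _ ≤ cost w T := by rw [two_nsmul] at htotal; rw [cost]; linarith

/-- For any weighted graph `G` on `V` with `|V| = n ≥ 3` and any binary tree
`T` with leaf set `V`, if `(A, B)` is the balanced cut of `T`, then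
`ω_G(T) ≥ (2n/3) · w(A, B)`. -/
theorem cost_ge_balanced_cut (V : Type) [Fintype V] [DecidableEq V] (n : ℕ) (hn : 3 ≤ n)
    (hcard : Fintype.card V = n) (w : V → V → ℝ) (hw : IsWeight w)
    (T : BTree V) (hT : IsHC T) :
    2 * (n : ℝ) / 3 * cutW w (bsub n T).leaves ((bsub n T).leaves)ᶜ ≤ cost w T :=
  cost_ge_balanced_cut_general V n w hw T hT
end

section
/- Let n be divisible by 5 with n ≥ 5, let G ∈ P(n,5), and let T be a binary tree with leaf set V whose balanced cut (A,B) misses at least α·(n/5) of the n/5 cycles of G, for some 0 < α ≤ 1. Then ω_G(T) ≥ (4α/15)·n². -/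
open Finset

/-- The weight function of a vertex-disjoint union of `m` cycles of length 5 (all present
edges having weight 1), described by a bijection `σ` sending each vertex to a pair
(cycle index, position on the cycle). -/
def cycleW {V : Type} {m : ℕ} (σ : V ≃ Fin m × ZMod 5) : V → V → ℝ := fun u v =>
  if (σ u).1 = (σ v).1 ∧ ((σ u).2 = (σ v).2 + 1 ∨ (σ v).2 = (σ u).2 + 1) then 1 else 0

/-- The set of 5-cycles missed by the cut `(A, Aᶜ)` : those having at least one vertex in `A`
and at least one vertex outside `A`. -/
def missed {V : Type} [Fintype V] [DecidableEq V] {m : ℕ} (σ : V ≃ Fin m × ZMod 5)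
    (A : Finset V) : Finset (Fin m) :=
  Finset.univ.filter fun i => (∃ u ∈ A, (σ u).1 = i) ∧ (∃ v ∈ Aᶜ, (σ v).1 = i)

/-!
Let `(A, Aᶜ)` be the balanced cut of `T`. For an edge `uv` crossing it, `T[u∧v]` is a strict
ancestor of the node `N_r` and so has at least `2n/3` leaves. A 5-cycle meeting both `A` and `Aᶜ`
has at least two edges crossing the cut, so at least `2α·n/5` edges each contribute at least
`2n/3` to the cost, which is therefore at least `(4α/15)·n²`.
-/

namespace BTree

variable {V : Type} [DecidableEq V]

lemma leaves_bsub_subset (n : ℕ) (T : BTree V) : (bsub n T).leaves ⊆ T.leaves := by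
  induction T with
  | leaf x => simp [bsub]
  | node L R ihL ihR =>
    rw [bsub, leaves_node]
    split_ifs
    · rw [leaves_node]
    · exact ihL.trans subset_union_left
    · exact ihR.trans subset_union_right

lemma bsub_of_lt (n : ℕ) (T : BTree V) (h : 3 * #T.leaves < 2 * n) : bsub n T = T := by
  cases T with
  | leaf x => rfl
  | node L R => rw [bsub, if_pos h]

lemma card_cluster_of_mem_bsub_of_notMem (n : ℕ) (T : BTree V) (hnd : T.leavesList.Nodup)
    (hT : 2 * n ≤ 3 * #T.leaves) {u v : V}
    (hu : u ∈ (bsub n T).leaves) (hv : v ∉ (bsub n T).leaves) :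
    2 * n ≤ 3 * #(T.cluster u v) := by
  induction T with
  | leaf x => simpa [cluster, leaves, leavesList] using hT
  | node L R ihL ihR =>
    obtain ⟨hndL, hndR, hdisj⟩ := List.nodup_append.mp hnd
    have hLR : ∀ x ∈ L.leaves, x ∉ R.leaves := fun x hxL hxR =>
      hdisj x (by simpa [leaves] using hxL) x (by simpa [leaves] using hxR) rfl
    rw [bsub, if_neg hT.not_gt] at hu hv
    split_ifs at hu hv
    · have huL := leaves_bsub_subset n L hu
      by_cases hvL : v ∈ L.leaves
      · have hL : 2 * n ≤ 3 * #L.leaves := by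
          by_contra hc
          exact hv (by rwa [bsub_of_lt n L (not_le.mp hc)])
        rw [cluster, if_pos ⟨huL, hvL⟩]
        exact ihL hndL hL hu hv
      · rwa [cluster, if_neg (fun h => hvL h.2), if_neg (fun h => hLR u huL h.1)]
    · have huR := leaves_bsub_subset n R hu
      by_cases hvR : v ∈ R.leaves
      · have hR : 2 * n ≤ 3 * #R.leaves := by
          by_contra hc
          exact hv (by rwa [bsub_of_lt n R (not_le.mp hc)])
        rw [cluster, if_neg (fun h => hLR u h.1 huR), if_pos ⟨huR, hvR⟩]
        exact ihR hndR hR hu hv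
      · rwa [cluster, if_neg (fun h => hLR u h.1 huR), if_neg (fun h => hvR h.2)]

lemma card_cluster_of_crossing_bsub (n : ℕ) (T : BTree V) (hnd : T.leavesList.Nodup)
    (hT : 2 * n ≤ 3 * #T.leaves) {u v : V}
    (huv : u ∈ (bsub n T).leaves ↔ v ∉ (bsub n T).leaves) :
    2 * n ≤ 3 * #(T.cluster u v) := by
  by_cases hu : u ∈ (bsub n T).leaves
  · exact T.card_cluster_of_mem_bsub_of_notMem n hnd hT hu (huv.mp hu)
  · rw [T.cluster_comm]
    exact T.card_cluster_of_mem_bsub_of_notMem n hnd hT (not_not.mp (mt huv.mpr hu)) hu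

end BTree

lemma half_card_mul_le_cost {V : Type} [Fintype V] [DecidableEq V] {w : V → V → ℝ}
    (hw : ∀ u v, 0 ≤ w u v) (T : BTree V) (X : Finset (V × V)) (c : ℝ)
    (hX : ∀ p ∈ X, c ≤ w p.1 p.2 * #(T.cluster p.1 p.2)) :
    #X * c / 2 ≤ cost w T := by
  have hsum : ∑ p ∈ X, c ≤ ∑ p : V × V, w p.1 p.2 * #(T.cluster p.1 p.2) :=
    (sum_le_sum hX).trans <| sum_le_sum_of_subset_of_nonneg (subset_univ X)
      fun p _ _ => mul_nonneg (hw _ _) (Nat.cast_nonneg _)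
  rw [sum_const, nsmul_eq_mul, ← univ_product_univ, sum_product] at hsum
  rw [cost]
  linarith

lemma four_le_card_cut_adjacent_zmod5 (s : Finset (ZMod 5)) (hs : s.Nonempty)
    (hsc : sᶜ.Nonempty) :
    4 ≤ #{q : ZMod 5 × ZMod 5 | (q.1 = q.2 + 1 ∨ q.2 = q.1 + 1) ∧ (q.1 ∈ s ↔ q.2 ∉ s)} := by
  revert s; decide

lemma cycleW_nonneg {V : Type} {m : ℕ} (σ : V ≃ Fin m × ZMod 5) (u v : V) :
    0 ≤ cycleW σ u v := by
  unfold cycleW; split_ifs <;> norm_num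

section Cycles

variable {V : Type} [Fintype V] [DecidableEq V] {m : ℕ} (σ : V ≃ Fin m × ZMod 5)

noncomputable def crossingPairs (A : Finset V) : Finset (V × V) :=
  {p | cycleW σ p.1 p.2 = 1 ∧ (p.1 ∈ A ↔ p.2 ∉ A)}

lemma four_le_card_crossingPairs_filter (A : Finset V) {i : Fin m} (hi : i ∈ missed σ A) :
    4 ≤ #{p ∈ crossingPairs σ A | (σ p.1).1 = i} := by
  obtain ⟨-, ⟨u, hu, rfl⟩, ⟨v, hv, hvi⟩⟩ := mem_filter.mp hi
  let s : Finset (ZMod 5) := {j | σ.symm ((σ u).1, j) ∈ A}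
  have hs : s.Nonempty := ⟨(σ u).2, by simpa [s] using hu⟩
  have hsc : sᶜ.Nonempty := ⟨(σ v).2, by simpa [s, ← hvi] using hv⟩
  refine (four_le_card_cut_adjacent_zmod5 s hs hsc).trans <|
    card_le_card_of_injOn (fun q => (σ.symm ((σ u).1, q.1), σ.symm ((σ u).1, q.2))) ?_ ?_
  · intro q hq
    simp only [coe_filter, mem_univ, true_and, Set.mem_ofPred_eq] at hq ⊢
    refine ⟨mem_filter.mpr ⟨mem_univ _, ?_, by simpa [s] using hq.2⟩, by simp⟩
    simp [cycleW, hq.1]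
  · intro q _ q' _ h
    simp only [Prod.mk.injEq, EmbeddingLike.apply_eq_iff_eq, true_and] at h
    exact Prod.ext h.1 h.2

lemma four_mul_card_missed_le (A : Finset V) :
    4 * #(missed σ A) ≤ #(crossingPairs σ A) :=
  calc 4 * #(missed σ A) = ∑ _i ∈ missed σ A, 4 := by rw [sum_const, smul_eq_mul, mul_comm]
    _ ≤ ∑ i ∈ missed σ A, #{p ∈ crossingPairs σ A | (σ p.1).1 = i} :=
      sum_le_sum fun i hi => four_le_card_crossingPairs_filter σ A hi
    _ ≤ ∑ i, #{p ∈ crossingPairs σ A | (σ p.1).1 = i} := sum_le_sum_of_subset (subset_univ _)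
    _ = #(crossingPairs σ A) := (card_eq_sum_card_fiberwise fun p _ => mem_univ _).symm

end Cycles

theorem cost_lower_of_missed_cycles_general (n : ℕ)
    (V : Type) [Fintype V] [DecidableEq V] (hcard : Fintype.card V = n)
    (σ : V ≃ Fin (n / 5) × ZMod 5) (T : BTree V) (hT : IsHC T)
    (α : ℝ)
    (hmiss : α * ((n : ℝ) / 5) ≤ ((missed σ (bsub n T).leaves).card : ℝ)) :
    4 * α / 15 * (n : ℝ) ^ 2 ≤ cost (cycleW σ) T := by
  set X := crossingPairs σ (bsub n T).leaves
  have hroot : 2 * n ≤ 3 * #T.leaves := by rw [hT.2, card_univ, hcard]; omega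
  have hcross : ∀ p ∈ X, 2 * (n : ℝ) / 3 ≤ cycleW σ p.1 p.2 * #(T.cluster p.1 p.2) := by
    intro p hp
    obtain ⟨hw, hcut⟩ := (mem_filter.mp hp).2
    have hcl : (2 * n : ℝ) ≤ 3 * #(T.cluster p.1 p.2) := by
      exact_mod_cast T.card_cluster_of_crossing_bsub n hT.1 hroot hcut
    rw [hw, one_mul]
    linarith
  have hX : (4 : ℝ) * #(missed σ (bsub n T).leaves) ≤ #X := by
    exact_mod_cast four_mul_card_missed_le σ _
  have hn : (0 : ℝ) ≤ n := n.cast_nonneg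
  calc 4 * α / 15 * (n : ℝ) ^ 2 ≤ #X * (2 * n / 3) / 2 := by nlinarith
    _ ≤ cost (cycleW σ) T := half_card_mul_le_cost (cycleW_nonneg σ) T X _ hcross

/-- Let `5 ∣ n`, `n ≥ 5`, let `G ∈ P(n,5)` (a disjoint union of `n/5`
5-cycles, described by `σ`), and let `T` be a binary tree with leaf set `V` whose balanced cut
misses at least `α·(n/5)` of the cycles of `G`, for some `0 < α ≤ 1`.
Then `ω_G(T) ≥ (4α/15)·n²`. -/
theorem cost_lower_of_missed_cycles (n : ℕ) (hn5 : 5 ∣ n) (hn : 5 ≤ n)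
    (V : Type) [Fintype V] [DecidableEq V] (hcard : Fintype.card V = n)
    (σ : V ≃ Fin (n / 5) × ZMod 5) (T : BTree V) (hT : IsHC T)
    (α : ℝ) (hα0 : 0 < α) (hα1 : α ≤ 1)
    (hmiss : α * ((n : ℝ) / 5) ≤ ((missed σ (bsub n T).leaves).card : ℝ)) :
    4 * α / 15 * (n : ℝ) ^ 2 ≤ cost (cycleW σ) T :=
  cost_lower_of_missed_cycles_general n V hcard σ T hT α hmiss
end

section
/- There exists n₀ such that for all n ≥ n₀ with 5 | n the following holds: if G₁ and G₂ are drawn independently and uniformly at random from P(n,5), then the probability that there exists a balanced cut (A,B) of V that misses at most n/500 of the cycles of G₁ and also misses at most n/500 of the cycles of G₂ is at most 2^{−0.4n}. -/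
open Finset

/-!
Write `n = 5m` and encode a graph of `P(n,5)` by a labelling `σ : V ≃ Fin m × ZMod 5`. Every
graph has the same number of labellings, so it suffices to show that at most `(n!)² / 4^m` pairs
of labellings share a balanced cut `A` missing at most `k = m/100` cycles of each. Given `A` with
`|A| = a`, a labelling is determined up to `a! (n-a)!` choices by its pattern
`i ↦ {z | σ⁻¹ (i, z) ∈ A}`, and at most `W ≤ 2^(6m) 496^k / 31^m` patterns split at most `k`
cycles. The union bound over `A` leaves at most `(n!)² W² ∑ₐ 1 / C(n, a)` bad pairs. Since
`i ↦ C(n, i) 2^(n-i)` peaks at `b = (n+1)/3`, we have `3^n ≤ (n+1) C(n, b) 2^(n-b)`, and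
`C(n, a) ≥ C(n, b)` for balanced `a`; for large `m` this gives the bound.
-/

open Filter

namespace Nat

theorem choose_le_choose_of_le_of_le_half {n a b : ℕ} (hba : b ≤ a) (ha : a ≤ n / 2) :
    n.choose b ≤ n.choose a := by
  induction a, hba using Nat.le_induction with
  | base => rfl
  | succ a _ ih => exact (ih (by omega)).trans (choose_le_succ_of_lt_half_left (by omega))

theorem choose_le_choose_of_le_of_le_sub {n a b : ℕ} (hba : b ≤ a) (hab : a ≤ n - b) :
    n.choose b ≤ n.choose a := by
  rcases le_or_gt a (n / 2) with ha | ha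
  · exact choose_le_choose_of_le_of_le_half hba ha
  · rw [← choose_symm (show a ≤ n by omega)]
    exact choose_le_choose_of_le_of_le_half (by omega) (by omega)

theorem choose_succ_mul_two_pow_mul (n i : ℕ) :
    n.choose (i + 1) * 2 ^ (n - (i + 1)) * (2 * (i + 1)) = n.choose i * 2 ^ (n - i) * (n - i) := by
  rcases lt_or_ge i n with h | h
  · have hpow : 2 ^ (n - i) = 2 ^ (n - (i + 1)) * 2 := by
      rw [← pow_succ]; congr 1; omega
    rw [hpow]
    have := choose_succ_right_eq n i
    calc n.choose (i + 1) * 2 ^ (n - (i + 1)) * (2 * (i + 1))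
        = n.choose (i + 1) * (i + 1) * (2 ^ (n - (i + 1)) * 2) := by ring
      _ = _ := by rw [this]; ring
  · simp [choose_eq_zero_of_lt (show n < i + 1 by omega), Nat.sub_eq_zero_of_le h]

theorem choose_mul_two_pow_le (n i : ℕ) :
    n.choose i * 2 ^ (n - i) ≤ n.choose ((n + 1) / 3) * 2 ^ (n - (n + 1) / 3) := by
  have step := choose_succ_mul_two_pow_mul n
  rcases le_total i ((n + 1) / 3) with hi | hi
  · induction hi using decreasingInduction with
    | self => rfl
    | of_succ j hj ih =>
      refine le_trans (Nat.le_of_mul_le_mul_right ?_ (show 0 < 2 * (j + 1) by omega)) ih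
      rw [step]
      exact Nat.mul_le_mul_left _ (by omega)
  · induction i, hi using Nat.le_induction with
    | base => rfl
    | succ j hj ih =>
      refine le_trans (Nat.le_of_mul_le_mul_right ?_ (show 0 < 2 * (j + 1) by omega)) ih
      rw [step]
      exact Nat.mul_le_mul_left _ (by omega)

theorem three_pow_le (n : ℕ) :
    3 ^ n ≤ (n + 1) * (n.choose ((n + 1) / 3) * 2 ^ (n - (n + 1) / 3)) := by
  have h3 : 3 ^ n = ∑ i ∈ range (n + 1), n.choose i * 2 ^ (n - i) := by
    rw [show 3 = 1 + 2 by rfl, add_pow]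
    exact sum_congr rfl fun i _ => by rw [Nat.cast_id]; ring
  rw [h3]
  exact (sum_le_card_nsmul _ _ _ fun i _ => choose_mul_two_pow_le n i).trans_eq
    (by rw [card_range, smul_eq_mul])

end Nat

/-- Cubing clears the fractional exponents coming from `(5 * m + 1) / 3` and `k ≤ m / 100`. -/
theorem sq_mul_pow_le_three_pow_mul_pow {m k : ℕ}
    (hm : 2 * (5 * m + 1) ^ 6 * 2 ^ (53 * m) ≤ (3 ^ 15 * 31 ^ 6) ^ m) (hk : 100 * k ≤ m) :
    (5 * m + 1) ^ 2 * 4 ^ m * (2 ^ (6 * m) * 496 ^ k) ^ 2 * 2 ^ (5 * m - (5 * m + 1) / 3)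
      ≤ 3 ^ (5 * m) * 31 ^ (2 * m) := by
  refine (Nat.pow_le_pow_iff_left (show 3 ≠ 0 by norm_num)).mp ?_
  have h496 : 496 ^ (6 * k) ≤ 2 ^ m :=
    calc 496 ^ (6 * k) ≤ (2 ^ 9) ^ (6 * k) := Nat.pow_le_pow_left (by norm_num) _
      _ ≤ 2 ^ m := by rw [← pow_mul]; exact Nat.pow_le_pow_right (by norm_num) (by omega)
  have hb : 2 ^ (3 * (5 * m - (5 * m + 1) / 3)) ≤ 2 ^ (10 * m + 1) :=
    Nat.pow_le_pow_right (by norm_num) (by omega)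
  calc ((5 * m + 1) ^ 2 * 4 ^ m * (2 ^ (6 * m) * 496 ^ k) ^ 2 * 2 ^ (5 * m - (5 * m + 1) / 3)) ^ 3
      = (5 * m + 1) ^ 6 * 2 ^ (42 * m) * 496 ^ (6 * k)
          * 2 ^ (3 * (5 * m - (5 * m + 1) / 3)) := by
        rw [show (4 : ℕ) ^ m = 2 ^ (2 * m) by rw [pow_mul]; norm_num]; ring
    _ ≤ (5 * m + 1) ^ 6 * 2 ^ (42 * m) * 2 ^ m * 2 ^ (10 * m + 1) := by gcongr
    _ = 2 * (5 * m + 1) ^ 6 * 2 ^ (53 * m) := by ring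
    _ ≤ (3 ^ 15 * 31 ^ 6) ^ m := hm
    _ = (3 ^ (5 * m) * 31 ^ (2 * m)) ^ 3 := by simp only [mul_pow, ← pow_mul]; ring

theorem eventually_two_mul_pow_le :
    ∀ᶠ m : ℕ in atTop, 2 * (5 * m + 1) ^ 6 * 2 ^ (53 * m) ≤ (3 ^ 15 * 31 ^ 6) ^ m := by
  have hr : (1 : ℝ) < 3 ^ 15 * 31 ^ 6 / 2 ^ 53 := by norm_num
  filter_upwards [(tendsto_pow_const_div_const_pow_of_one_lt 6 hr).eventually
    (gt_mem_nhds (show (0 : ℝ) < 1 / (2 * 6 ^ 6) by norm_num)), eventually_ge_atTop 1]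
    with m hm hm1
  have hpos : (0 : ℝ) < (3 ^ 15 * 31 ^ 6 / 2 ^ 53) ^ m := by positivity
  rw [div_lt_iff₀ hpos] at hm
  have h6 : ((5 * m + 1 : ℕ) : ℝ) ^ 6 ≤ 6 ^ 6 * (m : ℝ) ^ 6 := by
    rw [← mul_pow]; gcongr; push_cast; linarith [(show (1 : ℝ) ≤ m by exact_mod_cast hm1)]
  have : 2 * ((5 * m + 1 : ℕ) : ℝ) ^ 6 * 2 ^ (53 * m) ≤ (3 ^ 15 * 31 ^ 6 : ℝ) ^ m := by
    calc 2 * ((5 * m + 1 : ℕ) : ℝ) ^ 6 * 2 ^ (53 * m)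
        ≤ 2 * (6 ^ 6 * (m : ℝ) ^ 6) * 2 ^ (53 * m) := by gcongr
      _ ≤ (3 ^ 15 * 31 ^ 6 / 2 ^ 53) ^ m * 2 ^ (53 * m) := by gcongr; nlinarith
      _ = (3 ^ 15 * 31 ^ 6) ^ m := by
        rw [pow_mul, ← mul_pow]; congr 1; norm_num
  exact_mod_cast this

theorem succ_mul_four_pow_mul_sq_le_choose {m k a W : ℕ}
    (hm : 2 * (5 * m + 1) ^ 6 * 2 ^ (53 * m) ≤ (3 ^ 15 * 31 ^ 6) ^ m) (hk : 100 * k ≤ m)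
    (hW : 31 ^ m * W ≤ 2 ^ (6 * m) * 496 ^ k) (ha₁ : 5 * m ≤ 3 * a) (ha₂ : 3 * a ≤ 10 * m) :
    (5 * m + 1) * 4 ^ m * W ^ 2 ≤ (5 * m).choose a := by
  set b := (5 * m + 1) / 3
  have hpos : 0 < (5 * m + 1) * 2 ^ (5 * m - b) * 31 ^ (2 * m) := by positivity
  refine le_trans (Nat.le_of_mul_le_mul_right ?_ hpos)
    (Nat.choose_le_choose_of_le_of_le_sub (b := b) (by omega) (by omega))
  calc (5 * m + 1) * 4 ^ m * W ^ 2 * ((5 * m + 1) * 2 ^ (5 * m - b) * 31 ^ (2 * m))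
      = (5 * m + 1) ^ 2 * 4 ^ m * (31 ^ m * W) ^ 2 * 2 ^ (5 * m - b) := by ring
    _ ≤ (5 * m + 1) ^ 2 * 4 ^ m * (2 ^ (6 * m) * 496 ^ k) ^ 2 * 2 ^ (5 * m - b) := by gcongr
    _ ≤ 3 ^ (5 * m) * 31 ^ (2 * m) := sq_mul_pow_le_three_pow_mul_pow hm hk
    _ ≤ (5 * m + 1) * ((5 * m).choose b * 2 ^ (5 * m - b)) * 31 ^ (2 * m) := by
        gcongr; exact Nat.three_pow_le _
    _ = (5 * m).choose b * ((5 * m + 1) * 2 ^ (5 * m - b) * 31 ^ (2 * m)) := by ring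

section Patterns

variable {ι β : Type*} [Fintype ι] [DecidableEq ι] [Fintype β] [DecidableEq β]

def mixedIndices (P : ι → Finset β) : Finset ι :=
  {i | (P i).Nonempty ∧ P i ≠ univ}

theorem card_mixedIndices_subset [Nonempty β] (M : Finset ι) :
    #{P : ι → Finset β | mixedIndices P ⊆ M}
      = (2 ^ Fintype.card β) ^ #M * 2 ^ (Fintype.card ι - #M) := by
  have hpi : ({P | mixedIndices P ⊆ M} : Finset (ι → Finset β))
      = Fintype.piFinset fun i => if i ∈ M then univ else {∅, univ} := by
    ext P
    simp only [mixedIndices, mem_filter, mem_univ, true_and, Fintype.mem_piFinset, subset_iff]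
    refine forall_congr' fun i => ?_
    split_ifs with hi
    · simp [hi]
    · simp [hi, imp_iff_not_or, not_nonempty_iff_eq_empty]
  rw [hpi, Fintype.card_piFinset]
  simp only [apply_ite card]
  rw [prod_ite, prod_const, prod_const, filter_mem_eq_inter,
    univ_inter, card_pair univ_nonempty.ne_empty.symm, card_univ, Fintype.card_finset,
    filter_not, card_sdiff, filter_mem_eq_inter, univ_inter, inter_univ, card_univ]

theorem card_mixedIndices_le [Nonempty β] (k : ℕ) :
    #{P : ι → Finset β | #(mixedIndices P) ≤ k}
      ≤ ∑ M : Finset ι with #M ≤ k, (2 ^ Fintype.card β) ^ #M * 2 ^ (Fintype.card ι - #M) := by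
  rw [card_eq_sum_card_fiberwise (f := mixedIndices) (t := {M | #M ≤ k})
    fun P hP => by simpa using hP]
  refine sum_le_sum fun M _ => ?_
  rw [← card_mixedIndices_subset]
  exact card_le_card fun P hP => by
    simp only [mem_filter, mem_univ, true_and] at hP ⊢
    exact hP.2.subset

theorem thirtyOne_pow_mul_card_mixedIndices_le (hβ : Fintype.card β = 5) (k : ℕ) :
    31 ^ Fintype.card ι * #{P : ι → Finset β | #(mixedIndices P) ≤ k}
      ≤ 2 ^ (6 * Fintype.card ι) * 496 ^ k := by
  have : Nonempty β := Fintype.card_pos_iff.mp (by omega)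
  have term : ∀ m t, t ≤ m → t ≤ k →
      31 ^ m * (32 ^ t * 2 ^ (m - t)) ≤ 2 ^ m * 496 ^ k * (1 ^ t * 31 ^ (m - t)) := by
    intro m t htm htk
    obtain ⟨s, rfl⟩ := Nat.exists_eq_add_of_le htm
    rw [Nat.add_sub_cancel_left, show (496 : ℕ) = 31 * 16 by rfl]
    calc 31 ^ (t + s) * (32 ^ t * 2 ^ s) = 2 ^ (t + s) * (31 * 16) ^ t * (1 ^ t * 31 ^ s) := by
          rw [show (32 : ℕ) = 2 * 16 by rfl, mul_pow, mul_pow]; ring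
      _ ≤ _ := by gcongr; omega
  have hmixed := card_mixedIndices_le (ι := ι) (β := β) k
  rw [hβ] at hmixed
  calc 31 ^ Fintype.card ι * #{P : ι → Finset β | #(mixedIndices P) ≤ k}
      ≤ ∑ M : Finset ι with #M ≤ k,
          31 ^ Fintype.card ι * (32 ^ #M * 2 ^ (Fintype.card ι - #M)) := by
        rw [← mul_sum]; exact Nat.mul_le_mul_left _ hmixed
    _ ≤ ∑ M : Finset ι with #M ≤ k,
          2 ^ Fintype.card ι * 496 ^ k * (1 ^ #M * 31 ^ (Fintype.card ι - #M)) :=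
        sum_le_sum fun M hM => term _ _ (card_le_univ M) (mem_filter.mp hM).2
    _ ≤ ∑ M : Finset ι, 2 ^ Fintype.card ι * 496 ^ k * (1 ^ #M * 31 ^ (Fintype.card ι - #M)) :=
        sum_le_sum_of_subset (filter_subset _ _)
    _ = 2 ^ (6 * Fintype.card ι) * 496 ^ k := by
        rw [← mul_sum, Fintype.sum_pow_mul_eq_add_pow, show 6 * Fintype.card ι =
          Fintype.card ι + 5 * Fintype.card ι by ring, pow_add, pow_mul]
        norm_num
        ring

end Patterns

theorem Fintype.card_equiv_le {α β : Type*} [Fintype α] [Fintype β] [DecidableEq α]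
    [DecidableEq β] : Fintype.card (α ≃ β) ≤ (Fintype.card α).factorial := by
  rcases isEmpty_or_nonempty (α ≃ β) with h | ⟨⟨e⟩⟩
  · simp
  · rw [Fintype.card_equiv e]

theorem card_equiv_mem_iff_le {V T : Type*} [Fintype V] [DecidableEq V] [Fintype T]
    [DecidableEq T] (A : Finset V) (S : Finset T) :
    #{σ : V ≃ T | ∀ v, v ∈ A ↔ σ v ∈ S}
      ≤ (#A).factorial * (Fintype.card V - #A).factorial := by
  let F : {σ : V ≃ T // ∀ v, v ∈ A ↔ σ v ∈ S} → (A ≃ S) × ({v // v ∉ A} ≃ {t // t ∉ S}) :=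
    fun σ => (σ.1.subtypeEquiv σ.2, σ.1.subtypeEquiv fun v => not_congr (σ.2 v))
  have hF : Function.Injective F := by
    intro σ τ h
    ext v
    by_cases hv : v ∈ A
    · exact congrArg Subtype.val (DFunLike.congr_fun (congrArg Prod.fst h) ⟨v, hv⟩)
    · exact congrArg Subtype.val (DFunLike.congr_fun (congrArg Prod.snd h) ⟨v, hv⟩)
  rw [← Fintype.card_subtype]
  refine (Fintype.card_le_of_injective F hF).trans ?_
  rw [Fintype.card_prod]
  refine Nat.mul_le_mul (Fintype.card_equiv_le.trans_eq ?_) (Fintype.card_equiv_le.trans_eq ?_)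
  · rw [Fintype.card_coe]
  · rw [Fintype.card_subtype_compl, Fintype.card_coe]

section CutPattern

variable {V ι β : Type*} [DecidableEq V] [Fintype ι] [Fintype β] [DecidableEq β]

def cutPattern (σ : V ≃ ι × β) (A : Finset V) (i : ι) : Finset β :=
  {z | σ.symm (i, z) ∈ A}

theorem cutPattern_eq_iff (σ : V ≃ ι × β) (A : Finset V) (P : ι → Finset β) :
    cutPattern σ A = P ↔ ∀ v, v ∈ A ↔ σ v ∈ ({t | t.2 ∈ P t.1} : Finset (ι × β)) := by
  simp only [funext_iff, Finset.ext_iff, cutPattern, mem_filter, mem_univ, true_and]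
  constructor
  · intro h v
    simpa using h (σ v).1 (σ v).2
  · intro h i z
    simpa using h (σ.symm (i, z))

theorem card_cutPattern_eq_le [Fintype V] [DecidableEq ι] (A : Finset V) (P : ι → Finset β) :
    #{σ : V ≃ ι × β | cutPattern σ A = P}
      ≤ (#A).factorial * (Fintype.card V - #A).factorial := by
  simp only [cutPattern_eq_iff]
  exact card_equiv_mem_iff_le A _

theorem card_mixedIndices_cutPattern_le [Fintype V] [DecidableEq ι] (A : Finset V) (k : ℕ) :
    #{σ : V ≃ ι × β | #(mixedIndices (cutPattern σ A)) ≤ k}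
      ≤ (#A).factorial * (Fintype.card V - #A).factorial
        * #{P : ι → Finset β | #(mixedIndices P) ≤ k} :=
  card_le_mul_card_image_of_maps_to (f := (cutPattern · A)) (fun σ hσ => by simpa using hσ) _
    fun P _ => (card_le_card fun σ hσ => by simp_all).trans (card_cutPattern_eq_le A P)

end CutPattern

theorem missed_eq_mixedIndices_cutPattern {V : Type} [Fintype V] [DecidableEq V] {m : ℕ}
    (σ : V ≃ Fin m × ZMod 5) (A : Finset V) : missed σ A = mixedIndices (cutPattern σ A) := by
  ext i
  simp only [missed, mixedIndices, cutPattern, mem_filter, mem_univ, true_and, Finset.Nonempty,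
    ne_eq, eq_univ_iff_forall, not_forall, mem_compl]
  refine and_congr
    ⟨fun ⟨u, hu, hi⟩ => ⟨(σ u).2, by simp [← hi, hu]⟩, fun ⟨z, hz⟩ => ⟨_, hz, by simp⟩⟩
    ⟨fun ⟨u, hu, hi⟩ => ⟨(σ u).2, by simp [← hi, hu]⟩, fun ⟨z, hz⟩ => ⟨_, hz, by simp⟩⟩

theorem card_filter_fst_mem {V ι β : Type*} [Fintype V] [DecidableEq V] [DecidableEq ι]
    [Fintype β] (σ : V ≃ ι × β) (M : Finset ι) :
    #{u | (σ u).1 ∈ M} = #M * Fintype.card β := by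
  rw [← card_univ (α := β), ← card_product, ← card_map σ.symm.toEmbedding]
  congr 1
  ext u
  simp

theorem sum_factorial_mul_factorial (α : Type*) [Fintype α] :
    ∑ A : Finset α, (#A).factorial * (Fintype.card α - #A).factorial
      = (Fintype.card α + 1) * (Fintype.card α).factorial := by
  classical
  rw [← powerset_univ, sum_powerset_apply_card
    (f := fun j => j.factorial * (Fintype.card α - j).factorial), card_univ,
    sum_congr rfl fun j hj => by
      rw [smul_eq_mul, ← mul_assoc, Nat.choose_mul_factorial_mul_factorial
        (Nat.lt_succ_iff.mp (mem_range.mp hj))]]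
  simp

section BadBijections

variable {V : Type} [Fintype V] [DecidableEq V] {m k : ℕ}

theorem succ_mul_four_pow_mul_sq_card_le (hV : Fintype.card V = 5 * m)
    (hm : 2 * (5 * m + 1) ^ 6 * 2 ^ (53 * m) ≤ (3 ^ 15 * 31 ^ 6) ^ m) (hk : 100 * k ≤ m)
    {A : Finset V} (hA₁ : 5 * m ≤ 3 * #A) (hA₂ : 3 * #A ≤ 10 * m) :
    (5 * m + 1) * 4 ^ m * #{σ : V ≃ Fin m × ZMod 5 | #(missed σ A) ≤ k} ^ 2
      ≤ (5 * m).factorial * ((#A).factorial * (5 * m - #A).factorial) := by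
  have hW := thirtyOne_pow_mul_card_mixedIndices_le (ι := Fin m) (β := ZMod 5) (ZMod.card 5) k
  rw [Fintype.card_fin] at hW
  have hbad := card_mixedIndices_cutPattern_le (ι := Fin m) (β := ZMod 5) A k
  simp only [← missed_eq_mixedIndices_cutPattern, hV] at hbad
  have hA : #A ≤ 5 * m := hV ▸ card_le_univ A
  calc (5 * m + 1) * 4 ^ m * #{σ : V ≃ Fin m × ZMod 5 | #(missed σ A) ≤ k} ^ 2
      ≤ (5 * m + 1) * 4 ^ m * ((#A).factorial * (5 * m - #A).factorial
          * #{P : Fin m → Finset (ZMod 5) | #(mixedIndices P) ≤ k}) ^ 2 := by gcongr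
    _ = (5 * m + 1) * 4 ^ m * #{P : Fin m → Finset (ZMod 5) | #(mixedIndices P) ≤ k} ^ 2
          * ((#A).factorial * (5 * m - #A).factorial) ^ 2 := by ring
    _ ≤ (5 * m).choose #A * ((#A).factorial * (5 * m - #A).factorial) ^ 2 := by
        gcongr; exact succ_mul_four_pow_mul_sq_le_choose hm hk hW hA₁ hA₂
    _ = (5 * m).factorial * ((#A).factorial * (5 * m - #A).factorial) := by
        rw [← Nat.choose_mul_factorial_mul_factorial hA]; ring

theorem card_badPairs_mul_le (hV : Fintype.card V = 5 * m)
    (hm : 2 * (5 * m + 1) ^ 6 * 2 ^ (53 * m) ≤ (3 ^ 15 * 31 ^ 6) ^ m) (hk : 100 * k ≤ m) :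
    #{p : (V ≃ Fin m × ZMod 5) × (V ≃ Fin m × ZMod 5) | ∃ A : Finset V,
        (5 * m ≤ 3 * #A ∧ 3 * #A ≤ 10 * m) ∧ #(missed p.1 A) ≤ k ∧ #(missed p.2 A) ≤ k} * 4 ^ m
      ≤ (5 * m).factorial ^ 2 := by
  set badPairs := ({p : (V ≃ Fin m × ZMod 5) × (V ≃ Fin m × ZMod 5) | ∃ A : Finset V,
    (5 * m ≤ 3 * #A ∧ 3 * #A ≤ 10 * m) ∧ #(missed p.1 A) ≤ k ∧ #(missed p.2 A) ≤ k} : Finset _)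
  set bad : Finset V → Finset (V ≃ Fin m × ZMod 5) := fun A => {σ | #(missed σ A) ≤ k}
  set balanced : Finset (Finset V) := {A | 5 * m ≤ 3 * #A ∧ 3 * #A ≤ 10 * m}
  have hunion : #badPairs ≤ ∑ A ∈ balanced, #(bad A) ^ 2 := by
    refine (card_le_card fun p hp => ?_).trans (card_biUnion_le.trans_eq
      (sum_congr rfl fun A _ => (card_product (bad A) (bad A)).trans (sq _).symm))
    obtain ⟨A, hA, h₁, h₂⟩ := (mem_filter.mp hp).2
    exact mem_biUnion.mpr ⟨A, by simpa [balanced] using hA, by simpa [bad] using ⟨h₁, h₂⟩⟩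
  refine Nat.le_of_mul_le_mul_left ?_ (Nat.succ_pos (5 * m))
  calc (5 * m + 1) * (#badPairs * 4 ^ m)
      ≤ ∑ A ∈ balanced, (5 * m + 1) * 4 ^ m * #(bad A) ^ 2 := by
        rw [← mul_sum]; linarith [Nat.mul_le_mul_left ((5 * m + 1) * 4 ^ m) hunion]
    _ ≤ ∑ A ∈ balanced, (5 * m).factorial * ((#A).factorial * (5 * m - #A).factorial) :=
        sum_le_sum fun A hA => succ_mul_four_pow_mul_sq_card_le hV hm hk
          (mem_filter.mp hA).2.1 (mem_filter.mp hA).2.2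
    _ ≤ ∑ A : Finset V, (5 * m).factorial * ((#A).factorial * (5 * m - #A).factorial) :=
        sum_le_sum_of_subset (filter_subset _ _)
    _ = (5 * m + 1) * (5 * m).factorial ^ 2 := by
        rw [← mul_sum, ← hV, sum_factorial_mul_factorial]; ring

end BadBijections

section CycleGraphs

variable {V : Type} {m : ℕ}

theorem cycleW_ne_zero_iff (σ : V ≃ Fin m × ZMod 5) (u v : V) :
    cycleW σ u v ≠ 0 ↔ (σ u).1 = (σ v).1 ∧ ((σ u).2 = (σ v).2 + 1 ∨ (σ v).2 = (σ u).2 + 1) := by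
  unfold cycleW
  split_ifs with h <;> simp [h]

/-- A 5-cycle has diameter 2, so the cycles of `cycleW σ` are read off from its edges. -/
theorem fst_eq_fst_iff (σ : V ≃ Fin m × ZMod 5) (u v : V) :
    (σ u).1 = (σ v).1 ↔ ∃ x, (u = x ∨ cycleW σ u x ≠ 0) ∧ (x = v ∨ cycleW σ x v ≠ 0) := by
  simp only [cycleW_ne_zero_iff]
  constructor
  · intro h
    obtain ⟨y, hy⟩ : ∃ y : ZMod 5, ((σ u).2 = y ∨ (σ u).2 = y + 1 ∨ y = (σ u).2 + 1) ∧
        (y = (σ v).2 ∨ y = (σ v).2 + 1 ∨ (σ v).2 = y + 1) := by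
      generalize (σ u).2 = a; generalize (σ v).2 = b; revert a b; decide
    refine ⟨σ.symm ((σ u).1, y), ?_⟩
    simp only [Equiv.apply_symm_apply, σ.eq_symm_apply, σ.symm_apply_eq, Prod.ext_iff, h,
      true_and]
    exact hy
  · rintro ⟨x, hux | ⟨hux, -⟩, hxv | ⟨hxv, -⟩⟩ <;> simp_all

theorem fst_eq_fst_iff_of_cycleW_eq {σ τ : V ≃ Fin m × ZMod 5} (h : cycleW σ = cycleW τ)
    (u v : V) : (σ u).1 = (σ v).1 ↔ (τ u).1 = (τ v).1 := by
  rw [fst_eq_fst_iff, fst_eq_fst_iff, h]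

theorem cycleW_trans_eq_of_cycleW_eq (g : Equiv.Perm V) {ρ σ : V ≃ Fin m × ZMod 5}
    (h : cycleW ρ = cycleW σ) : cycleW (g.trans ρ) = cycleW (g.trans σ) :=
  funext fun u => funext fun v => congrFun (congrFun h (g u)) (g v)

variable [Fintype V] [DecidableEq V]

theorem card_missed_eq_of_cycleW_eq {σ τ : V ≃ Fin m × ZMod 5} (h : cycleW σ = cycleW τ)
    (A : Finset V) : #(missed σ A) = #(missed τ A) := by
  have hcycles :
      ({u | (σ u).1 ∈ missed σ A} : Finset V) = ({u | (τ u).1 ∈ missed τ A} : Finset V) := by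
    ext u
    simp only [missed, mem_filter, mem_univ, true_and, fst_eq_fst_iff_of_cycleW_eq h]
  have h₁ := card_filter_fst_mem σ (missed σ A)
  have h₂ := card_filter_fst_mem τ (missed τ A)
  rw [hcycles, h₂] at h₁
  exact (Nat.eq_of_mul_eq_mul_right (by simp) h₁).symm

theorem card_fiber_cycleW_eq (σ τ : V ≃ Fin m × ZMod 5) :
    #{ρ : V ≃ Fin m × ZMod 5 | cycleW ρ = cycleW σ}
      = #{ρ : V ≃ Fin m × ZMod 5 | cycleW ρ = cycleW τ} := by
  obtain ⟨g, rfl⟩ : ∃ g : Equiv.Perm V, τ = g.trans σ :=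
    ⟨τ.trans σ.symm, Equiv.ext fun _ => by simp⟩
  refine card_nbij' (g.trans ·) (g.symm.trans ·) (fun ρ hρ => ?_) (fun ρ hρ => ?_)
    (fun ρ _ => Equiv.ext fun _ => by simp) (fun ρ _ => Equiv.ext fun _ => by simp)
  · simpa using cycleW_trans_eq_of_cycleW_eq g (by simpa using hρ)
  · simpa [← Equiv.trans_assoc] using cycleW_trans_eq_of_cycleW_eq g.symm (σ := g.trans σ)
      (by simpa using hρ)

end CycleGraphs

theorem Nat.card_subtype_exists_eq {α γ : Type*} [Fintype α] [DecidableEq γ] (f : α → γ) :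
    Nat.card {w // ∃ a, w = f a} = #(univ.image f) := by
  rw [← Nat.card_eq_finsetCard]
  exact Nat.card_congr (Equiv.subtypeEquivRight fun w => by simp [eq_comm])

theorem Nat.card_subtype_exists_prod_eq {α γ : Type*} [Fintype α] [DecidableEq γ] (f : α → γ)
    (R : α → α → Prop) [DecidableRel R] :
    Nat.card {q : γ × γ // ∃ a b, q.1 = f a ∧ q.2 = f b ∧ R a b}
      = #(({p | R p.1 p.2} : Finset (α × α)).image (Prod.map f f)) := by
  rw [← Nat.card_eq_finsetCard]
  refine Nat.card_congr (Equiv.subtypeEquivRight fun q => ?_)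
  simp only [mem_image, mem_filter, mem_univ, true_and, Prod.exists, Prod.map, Prod.ext_iff]
  constructor
  · rintro ⟨a, b, h₁, h₂, hab⟩; exact ⟨a, b, hab, h₁.symm, h₂.symm⟩
  · rintro ⟨a, b, hab, h₁, h₂⟩; exact ⟨a, b, h₁.symm, h₂.symm, hab⟩

section Counting

variable {V : Type} [Fintype V] [DecidableEq V] {m : ℕ}

theorem factorial_le_mul_card_image_cycleW (σ₀ : V ≃ Fin m × ZMod 5) :
    (Fintype.card V).factorial
      ≤ #{ρ : V ≃ Fin m × ZMod 5 | cycleW ρ = cycleW σ₀}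
        * #((univ : Finset (V ≃ Fin m × ZMod 5)).image cycleW) := by
  rw [← Fintype.card_equiv σ₀, ← card_univ]
  refine card_le_mul_card_image _ _ fun w hw => ?_
  obtain ⟨σ, -, rfl⟩ := mem_image.mp hw
  exact (card_fiber_cycleW_eq σ σ₀).le

theorem sq_mul_card_image_le_card_of_saturated (σ₀ : V ≃ Fin m × ZMod 5)
    (s : Finset ((V ≃ Fin m × ZMod 5) × (V ≃ Fin m × ZMod 5)))
    (hs : ∀ p ∈ s, ∀ r, cycleW r.1 = cycleW p.1 → cycleW r.2 = cycleW p.2 → r ∈ s) :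
    #{ρ : V ≃ Fin m × ZMod 5 | cycleW ρ = cycleW σ₀} ^ 2 * #(s.image (Prod.map cycleW cycleW))
      ≤ #s := by
  refine mul_card_image_le_card _ _ fun q hq => ?_
  obtain ⟨p, hp, rfl⟩ := mem_image.mp hq
  rw [sq]
  nth_rw 1 [← card_fiber_cycleW_eq p.1 σ₀]
  rw [← card_fiber_cycleW_eq p.2 σ₀, ← card_product]
  refine card_le_card fun r hr => ?_
  simp only [mem_product, mem_filter, mem_univ, true_and] at hr
  exact mem_filter.mpr ⟨hs p hp r hr.1 hr.2, Prod.ext hr.1 hr.2⟩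

end Counting

theorem cut_bounds_of_real_bounds {m a x y : ℕ} (ha₁ : ((5 * m : ℕ) : ℝ) / 3 ≤ a)
    (ha₂ : (a : ℝ) ≤ 2 * ((5 * m : ℕ) : ℝ) / 3) (hx : (x : ℝ) ≤ ((5 * m : ℕ) : ℝ) / 500)
    (hy : (y : ℝ) ≤ ((5 * m : ℕ) : ℝ) / 500) :
    (5 * m ≤ 3 * a ∧ 3 * a ≤ 10 * m) ∧ x ≤ m / 100 ∧ y ≤ m / 100 := by
  have hfloor : ∀ z : ℕ, (z : ℝ) ≤ ((5 * m : ℕ) : ℝ) / 500 → z ≤ m / 100 := fun z hz => by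
    have := (Nat.le_floor hz).trans_eq (by rw [Nat.floor_div_ofNat, Nat.floor_natCast])
    omega
  have ha₁' : ((5 * m : ℕ) : ℝ) ≤ 3 * a := by linarith
  have ha₂' : 3 * (a : ℝ) ≤ (10 * m : ℕ) := by push_cast at ha₂ ⊢; linarith
  exact ⟨⟨by exact_mod_cast ha₁', by exact_mod_cast ha₂'⟩, hfloor x hx, hfloor y hy⟩

theorem natCard_badGraphPairs_mul_le {V : Type} [Fintype V] [DecidableEq V] {m : ℕ}
    (hV : Fintype.card V = 5 * m)
    (hm : 2 * (5 * m + 1) ^ 6 * 2 ^ (53 * m) ≤ (3 ^ 15 * 31 ^ 6) ^ m) :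
    Nat.card {q : (V → V → ℝ) × (V → V → ℝ) //
        ∃ σ₁ σ₂ : V ≃ Fin m × ZMod 5,
          q.1 = cycleW σ₁ ∧ q.2 = cycleW σ₂ ∧
          ∃ A : Finset V,
            ((5 * m : ℕ) : ℝ) / 3 ≤ (A.card : ℝ) ∧ (A.card : ℝ) ≤ 2 * ((5 * m : ℕ) : ℝ) / 3 ∧
            ((missed σ₁ A).card : ℝ) ≤ ((5 * m : ℕ) : ℝ) / 500 ∧
            ((missed σ₂ A).card : ℝ) ≤ ((5 * m : ℕ) : ℝ) / 500} * 4 ^ m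
      ≤ Nat.card {w : V → V → ℝ // ∃ σ : V ≃ Fin m × ZMod 5, w = cycleW σ} ^ 2 := by
  classical
  rw [Nat.card_subtype_exists_prod_eq, Nat.card_subtype_exists_eq]
  obtain ⟨σ₀⟩ : Nonempty (V ≃ Fin m × ZMod 5) :=
    ⟨Fintype.equivOfCardEq (by simp [hV, mul_comm])⟩
  have hc : 0 < #{ρ : V ≃ Fin m × ZMod 5 | cycleW ρ = cycleW σ₀} :=
    card_pos.mpr ⟨σ₀, by simp⟩
  have hgraphs := factorial_le_mul_card_image_cycleW σ₀
  have hbad := card_badPairs_mul_le (k := m / 100) hV hm (by omega)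
  refine Nat.le_of_mul_le_mul_left ?_ (pow_pos hc 2)
  rw [← mul_assoc, ← mul_pow]
  refine (Nat.mul_le_mul_right _ (sq_mul_card_image_le_card_of_saturated σ₀ _ ?_)).trans ?_
  · intro p hp r h₁ h₂
    simpa only [mem_filter, mem_univ, true_and, card_missed_eq_of_cycleW_eq h₁,
      card_missed_eq_of_cycleW_eq h₂] using hp
  refine ((Nat.mul_le_mul_right _ (card_le_card fun p hp => ?_)).trans hbad).trans ?_
  · obtain ⟨A, h₁, h₂, h₃, h₄⟩ := (mem_filter.mp hp).2
    exact mem_filter.mpr ⟨mem_univ _, A, cut_bounds_of_real_bounds h₁ h₂ h₃ h₄⟩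
  · rw [← hV]; exact Nat.pow_le_pow_left hgraphs 2

/-- The probability is expressed by counting: the number of bad pairs of graphs is at most
`2^(−0.4·n)` times the squared number of graphs in `P(n,5)`. -/
theorem two_graph_packing :
    ∃ n₀ : ℕ, ∀ n : ℕ, n₀ ≤ n → 5 ∣ n →
      ∀ (V : Type) [Fintype V] [DecidableEq V], Fintype.card V = n →
        (Nat.card {q : (V → V → ℝ) × (V → V → ℝ) //
            ∃ σ₁ σ₂ : V ≃ Fin (n / 5) × ZMod 5,
              q.1 = cycleW σ₁ ∧ q.2 = cycleW σ₂ ∧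
              ∃ A : Finset V,
                (n : ℝ) / 3 ≤ (A.card : ℝ) ∧ (A.card : ℝ) ≤ 2 * (n : ℝ) / 3 ∧
                ((missed σ₁ A).card : ℝ) ≤ (n : ℝ) / 500 ∧
                ((missed σ₂ A).card : ℝ) ≤ (n : ℝ) / 500} : ℝ)
          ≤ (2 : ℝ) ^ (-(0.4 : ℝ) * (n : ℝ)) *
            (Nat.card {w : V → V → ℝ // ∃ σ : V ≃ Fin (n / 5) × ZMod 5, w = cycleW σ} : ℝ) ^ 2 := by
  obtain ⟨m₀, hm₀⟩ := eventually_atTop.mp eventually_two_mul_pow_le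
  refine ⟨5 * m₀, fun n hn hdvd V _ _ hV => ?_⟩
  obtain ⟨m, rfl⟩ := hdvd
  rw [Nat.mul_div_cancel_left m (by norm_num)]
  have hcount := natCard_badGraphPairs_mul_le hV (hm₀ m (by omega))
  have hpow : (2 : ℝ) ^ (-(0.4 : ℝ) * ((5 * m : ℕ) : ℝ)) = ((4 : ℝ) ^ m)⁻¹ := by
    rw [show -(0.4 : ℝ) * ((5 * m : ℕ) : ℝ) = -((2 * m : ℕ) : ℝ) by push_cast; ring,
      Real.rpow_neg (by norm_num), Real.rpow_natCast, pow_mul]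
    norm_num
  rw [hpow, inv_mul_eq_div, le_div_iff₀ (by positivity)]
  exact_mod_cast hcount
end

section
/- Let G = (V,w) and G' = (V,w') be weighted graphs on the same vertex set V with |V| = n, and suppose G' is an (α,β)-approximation to cut queries in G with 0 ≤ α ≤ 1/2 and β ≥ 0. Let a ≥ 1 and let T' be a binary tree with leaf set V satisfying ω_{G'}(T') ≤ a·ω_{G'}*. Then ω_G(T') ≤ (1+4α)·a·ω_G* + (4a+4)·β·n². -/
open Finset

/-- `G' = (V,w')` is an `(α,β)`-approximation to cut queries in `G = (V,w)`. -/
def CutApprox {V : Type} [Fintype V] [DecidableEq V] (w w' : V → V → ℝ) (α β : ℝ) : Prop :=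
  ∀ S : Finset V,
    (1 - α) * cutW w S Sᶜ
        - β * ((min S.card (Fintype.card V - S.card) : ℕ) : ℝ) ≤ cutW w' S Sᶜ ∧
    cutW w' S Sᶜ ≤ (1 + α) * cutW w S Sᶜ
        + β * ((min S.card (Fintype.card V - S.card) : ℕ) : ℝ)


/-!
Dasgupta's cost of a full hierarchy is a nonnegative combination of cut values:
`2 ω_w(T) = ∑ₓ cut_w {x} + ∑_A |sibling of A| · cut_w A` over the non-root subtrees `A`, and the
same combination of `min(|S|, n - |S|) ≤ |S|` is at most `n²`. An `(α, β)`-approximation to cut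
queries therefore gives `|ω_{w'}(T) - ω_w(T)| ≤ α ω_w(T) + β n² / 2` for every tree `T`, hence
`ω_{w'}* ≤ (1 + α) ω_w* + β n² / 2`. Chaining `(1 - α) ω_w(T') - β n² / 2 ≤ ω_{w'}(T') ≤ a ω_{w'}*`
with this and dividing by `1 - α ≥ 1/2` gives the claim.
-/

namespace BTree

variable {V : Type} [DecidableEq V]

lemma leaves_leaf (x : V) : (leaf x).leaves = {x} := by
  simp [leaves, leavesList]

lemma nodup_node_iff {L R : BTree V} :
    (node L R).leavesList.Nodup ↔
      L.leavesList.Nodup ∧ R.leavesList.Nodup ∧ Disjoint L.leaves R.leaves := by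
  rw [leavesList, List.nodup_append', leaves, leaves, List.disjoint_toFinset_iff_disjoint]

section Cluster

variable {L R : BTree V} {u v : V}

lemma cluster_node_of_mem_left (hu : u ∈ L.leaves) (hv : v ∈ L.leaves) :
    (node L R).cluster u v = L.cluster u v := by
  rw [cluster, if_pos ⟨hu, hv⟩]

lemma cluster_node_of_mem_right (h : Disjoint L.leaves R.leaves) (hu : u ∈ R.leaves)
    (hv : v ∈ R.leaves) : (node L R).cluster u v = R.cluster u v := by
  rw [cluster, if_neg fun huv => disjoint_right.mp h hu huv.1, if_pos ⟨hu, hv⟩]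

lemma cluster_node_of_mem_left_right (h : Disjoint L.leaves R.leaves) (hu : u ∈ L.leaves)
    (hv : v ∈ R.leaves) : (node L R).cluster u v = (node L R).leaves := by
  rw [cluster, if_neg fun huv => disjoint_right.mp h hv huv.2,
    if_neg fun huv => disjoint_left.mp h hu huv.1]

lemma cluster_node_of_mem_right_left (h : Disjoint L.leaves R.leaves) (hu : u ∈ R.leaves)
    (hv : v ∈ L.leaves) : (node L R).cluster u v = (node L R).leaves := by
  rw [cluster, if_neg fun huv => disjoint_right.mp h hu huv.1,
    if_neg fun huv => disjoint_left.mp h hv huv.2]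

end Cluster

noncomputable def clusterCost (w : V → V → ℝ) (T : BTree V) : ℝ :=
  ∑ u ∈ T.leaves, ∑ v ∈ T.leaves, w u v * ((T.cluster u v).card : ℝ)

lemma clusterCost_node (w : V → V → ℝ) {L R : BTree V} (h : Disjoint L.leaves R.leaves) :
    (node L R).clusterCost w = L.clusterCost w + R.clusterCost w
      + (node L R).leaves.card * (cutW w L.leaves R.leaves + cutW w R.leaves L.leaves) := by
  have hsplit : ∀ f : V → V → ℝ, ∑ u ∈ (node L R).leaves, ∑ v ∈ (node L R).leaves, f u v
      = ∑ u ∈ L.leaves, ∑ v ∈ L.leaves, f u v + ∑ u ∈ R.leaves, ∑ v ∈ R.leaves, f u v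
        + (∑ u ∈ L.leaves, ∑ v ∈ R.leaves, f u v + ∑ u ∈ R.leaves, ∑ v ∈ L.leaves, f u v) := by
    intro f
    simp only [leaves_node, sum_union h, sum_add_distrib]
    ring
  rw [clusterCost, hsplit, clusterCost, clusterCost, cutW, cutW, mul_add, mul_sum, mul_sum]
  congr 2
  · exact sum_congr rfl fun u hu => sum_congr rfl fun v hv => by
      rw [cluster_node_of_mem_left hu hv]
  · exact sum_congr rfl fun u hu => sum_congr rfl fun v hv => by
      rw [cluster_node_of_mem_right h hu hv]
  · exact sum_congr rfl fun u hu => by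
      rw [mul_sum]
      exact sum_congr rfl fun v hv => by rw [cluster_node_of_mem_left_right h hu hv, mul_comm]
  · exact sum_congr rfl fun u hu => by
      rw [mul_sum]
      exact sum_congr rfl fun v hv => by rw [cluster_node_of_mem_right_left h hu hv, mul_comm]

def siblingCutSum (c : Finset V → ℝ) : BTree V → ℝ
  | leaf x => c {x}
  | node L R => L.siblingCutSum c + R.siblingCutSum c
      + R.leaves.card * c L.leaves + L.leaves.card * c R.leaves

lemma siblingCutSum_linear (a b : ℝ) (c d : Finset V → ℝ) (T : BTree V) :
    T.siblingCutSum (fun S => a * c S + b * d S)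
      = a * T.siblingCutSum c + b * T.siblingCutSum d := by
  induction T with
  | leaf x => rfl
  | node L R ihL ihR =>
    simp only [siblingCutSum, ihL, ihR]
    ring

lemma siblingCutSum_mono {c d : Finset V → ℝ} (h : ∀ S, c S ≤ d S) (T : BTree V) :
    T.siblingCutSum c ≤ T.siblingCutSum d := by
  induction T with
  | leaf x => exact h _
  | node L R ihL ihR =>
    simp only [siblingCutSum]
    gcongr <;> exact h _

lemma siblingCutSum_card {T : BTree V} (hT : T.leavesList.Nodup) :
    T.siblingCutSum (fun S => (S.card : ℝ)) = (T.leaves.card : ℝ) ^ 2 := by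
  induction T with
  | leaf x => simp [siblingCutSum, leaves_leaf]
  | node L R ihL ihR =>
    obtain ⟨hL, hR, hLR⟩ := nodup_node_iff.mp hT
    rw [siblingCutSum, ihL hL, ihR hR, leaves_node, card_union_of_disjoint hLR]
    push_cast
    ring

end BTree

open BTree

section Cut

variable {V : Type} [Fintype V] [DecidableEq V]

lemma compl_eq_union_compl_union {A B : Finset V} (h : Disjoint A B) : Aᶜ = B ∪ (A ∪ B)ᶜ := by
  ext x
  by_cases hx : x ∈ B <;> simp [hx, disjoint_right.mp h]

lemma cutW_compl_add_cutW_compl (w : V → V → ℝ) {A B : Finset V} (h : Disjoint A B) :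
    cutW w A Aᶜ + cutW w B Bᶜ = cutW w A B + cutW w B A + cutW w (A ∪ B) (A ∪ B)ᶜ := by
  have hA : Disjoint B (A ∪ B)ᶜ := disjoint_compl_right.mono_left subset_union_right
  have hB : Disjoint A (A ∪ B)ᶜ := disjoint_compl_right.mono_left subset_union_left
  rw [compl_eq_union_compl_union h, compl_eq_union_compl_union h.symm, union_comm B A]
  simp only [cutW, sum_union h, sum_union hA, sum_union hB, sum_add_distrib]
  ring

lemma clusterCost_add_card_mul_cutW {w : V → V → ℝ} (hdiag : ∀ u, w u u = 0) {T : BTree V}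
    (hT : T.leavesList.Nodup) :
    T.clusterCost w + T.leaves.card * cutW w T.leaves T.leavesᶜ
      = T.siblingCutSum (fun S => cutW w S Sᶜ) := by
  induction T with
  | leaf x => simp [clusterCost, siblingCutSum, leaves_leaf, cluster, hdiag]
  | node L R ihL ihR =>
    obtain ⟨hL, hR, hLR⟩ := nodup_node_iff.mp hT
    have hcut := cutW_compl_add_cutW_compl w hLR
    rw [siblingCutSum, ← ihL hL, ← ihR hR, clusterCost_node w hLR, leaves_node,
      card_union_of_disjoint hLR]
    push_cast
    linear_combination (-(L.leaves.card + R.leaves.card : ℝ)) * hcut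

lemma two_mul_cost_eq {w : V → V → ℝ} (hdiag : ∀ u, w u u = 0) {T : BTree V} (hT : IsHC T) :
    2 * cost w T = T.siblingCutSum (fun S => cutW w S Sᶜ) := by
  rw [← clusterCost_add_card_mul_cutW hdiag hT.1, hT.2, compl_univ, clusterCost, cost, hT.2]
  simp [cutW]

lemma siblingCutSum_min_card_le {T : BTree V} (hT : IsHC T) :
    T.siblingCutSum (fun S => ((min S.card (Fintype.card V - S.card) : ℕ) : ℝ))
      ≤ (Fintype.card V : ℝ) ^ 2 := by
  calc _ ≤ T.siblingCutSum (fun S => (S.card : ℝ)) :=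
        siblingCutSum_mono (fun S => by exact_mod_cast min_le_left _ _) T
    _ = _ := by rw [siblingCutSum_card hT.1, hT.2, card_univ]

lemma cost_bounds_of_cutApprox {w w' : V → V → ℝ} {α β : ℝ} (hdiag : ∀ u, w u u = 0)
    (hdiag' : ∀ u, w' u u = 0) (happrox : CutApprox w w' α β) (hβ : 0 ≤ β) {T : BTree V}
    (hT : IsHC T) :
    (1 - α) * cost w T - β * Fintype.card V ^ 2 / 2 ≤ cost w' T ∧
      cost w' T ≤ (1 + α) * cost w T + β * Fintype.card V ^ 2 / 2 := by
  set m : Finset V → ℝ := fun S => ((min S.card (Fintype.card V - S.card) : ℕ) : ℝ)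
  have hm : β * T.siblingCutSum m ≤ β * Fintype.card V ^ 2 :=
    mul_le_mul_of_nonneg_left (siblingCutSum_min_card_le hT) hβ
  have hlow := siblingCutSum_mono (c := fun S => (1 - α) * cutW w S Sᶜ + (-β) * m S)
    (d := fun S => cutW w' S Sᶜ) (fun S => by linarith [(happrox S).1]) T
  have hupp := siblingCutSum_mono (c := fun S => cutW w' S Sᶜ)
    (d := fun S => (1 + α) * cutW w S Sᶜ + β * m S) (fun S => (happrox S).2) T
  rw [siblingCutSum_linear, ← two_mul_cost_eq hdiag hT, ← two_mul_cost_eq hdiag' hT] at hlow hupp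
  constructor <;> linarith

end Cut

section OptCost

variable {V : Type} [Fintype V] [DecidableEq V] {w w' : V → V → ℝ}

lemma cost_nonneg (hw : ∀ u v, 0 ≤ w u v) (T : BTree V) : 0 ≤ cost w T :=
  mul_nonneg (by norm_num) <| sum_nonneg fun u _ => sum_nonneg fun v _ =>
    mul_nonneg (hw u v) (Nat.cast_nonneg _)

lemma optCost_nonneg (hw : ∀ u v, 0 ≤ w u v) : 0 ≤ optCost w :=
  Real.sInf_nonneg <| by
    rintro _ ⟨T, -, rfl⟩
    exact cost_nonneg hw T

lemma optCost_le_cost (hw : ∀ u v, 0 ≤ w u v) {T : BTree V} (hT : IsHC T) :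
    optCost w ≤ cost w T :=
  csInf_le ⟨0, by rintro _ ⟨T, -, rfl⟩; exact cost_nonneg hw T⟩ ⟨T, hT, rfl⟩

lemma le_optCost {c : ℝ} (hne : ∃ T : BTree V, IsHC T) (h : ∀ T, IsHC T → c ≤ cost w T) :
    c ≤ optCost w := by
  obtain ⟨T, hT⟩ := hne
  exact le_csInf ⟨_, T, hT, rfl⟩ <| by
    rintro _ ⟨T, hT, rfl⟩
    exact h T hT

lemma optCost_le_of_cost_le (hw' : ∀ u v, 0 ≤ w' u v) {k γ : ℝ} (hk : 0 < k)
    (hne : ∃ T : BTree V, IsHC T) (h : ∀ T, IsHC T → cost w' T ≤ k * cost w T + γ) :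
    optCost w' ≤ k * optCost w + γ := by
  have : (optCost w' - γ) / k ≤ optCost w := le_optCost hne fun T hT => by
    rw [div_le_iff₀' hk]
    linarith [optCost_le_cost hw' hT, h T hT]
  rw [div_le_iff₀' hk] at this
  linarith

end OptCost

/-- If `G'` is an `(α,β)`-approximation to cut queries in `G` with
`0 ≤ α ≤ 1/2`, `β ≥ 0`, and `T'` is an `a`-approximately optimal tree for `G'` (`a ≥ 1`),
then `ω_G(T') ≤ (1+4α)·a·ω_G* + (4a+4)·β·n²`. -/
theorem approx_transfer_of_cut_approx (V : Type) [Fintype V] [DecidableEq V] (n : ℕ)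
    (hcard : Fintype.card V = n) (w w' : V → V → ℝ) (hw : IsWeight w) (hw' : IsWeight w')
    (α β : ℝ) (hα0 : 0 ≤ α) (hα1 : α ≤ 1 / 2) (hβ : 0 ≤ β) (happrox : CutApprox w w' α β)
    (a : ℝ) (ha : 1 ≤ a) (T' : BTree V) (hT' : IsHC T')
    (hopt : cost w' T' ≤ a * optCost w') :
    cost w T' ≤ (1 + 4 * α) * a * optCost w + (4 * a + 4) * β * (n : ℝ) ^ 2 := by
  subst hcard
  have hbounds := fun T (hT : IsHC T) => cost_bounds_of_cutApprox hw.2.2 hw'.2.2 happrox hβ hT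
  have hopt' : optCost w' ≤ (1 + α) * optCost w + β * Fintype.card V ^ 2 / 2 :=
    optCost_le_of_cost_le hw'.1 (by linarith) ⟨T', hT'⟩ fun T hT => (hbounds T hT).2
  have hlow := (hbounds T' hT').1
  have hOPT := optCost_nonneg hw.1
  have hB : 0 ≤ β * (Fintype.card V : ℝ) ^ 2 := by positivity
  have ha0 : 0 ≤ a := by linarith
  have hchain : (1 - α) * cost w T'
      ≤ a * (1 + α) * optCost w + (a + 1) * (β * Fintype.card V ^ 2) / 2 := by
    linarith [mul_le_mul_of_nonneg_left hopt' ha0]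
  -- `1 + α ≤ (1 + 4α)(1 - α)` because `α ≤ 1/2`
  nlinarith [mul_nonneg (mul_nonneg hα0 (by linarith : (0 : ℝ) ≤ 1 - 2 * α)) (mul_nonneg ha0 hOPT),
    mul_nonneg (by linarith : (0 : ℝ) ≤ a + 1) hB]
end

section
/- Let n ≥ 2, 0 < δ < 1, and let m be an integer with m ≥ 64·ln(2n/δ). Let M and M' be real d×c matrices with c ≤ n/4 columns, and let P be a random m×d matrix whose entries are i.i.d. Gaussian with mean 0 and variance 1/m. Then with probability at least 1 − δ/4 over the choice of P, ‖P·M − P·M'‖_F ≤ (3/2)·‖M − M'‖_F, where ‖·‖_F denotes the Frobenius norm. -/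
/-!
Fix a column `x` of `M - M'`. The entries of `P x` are independent centred Gaussians of variance
`‖x‖² / m`, so `m ‖P x‖² / ‖x‖²` is chi-squared with `m` degrees of freedom. Its moment generating
function at `1/8` is `(4/3)^(m/2)`, and the Chernoff bound gives
`P(‖P x‖² > 9/4 ‖x‖²) ≤ e^(-9m/32) (4/3)^(m/2) ≤ e^(-m/64)`. The squared Frobenius norm is the sum
of the squared column norms, so a union bound over the `c ≤ n/4` columns, together with
`e^(-m/64) ≤ δ/(2n)`, bounds the failure probability by `δ/8`.
-/

open MeasureTheory ProbabilityTheory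

/-- The Frobenius norm of a real matrix. -/
noncomputable def frobNorm {a b : Type} [Fintype a] [Fintype b]
    (X : Matrix a b ℝ) : ℝ :=
  Real.sqrt (∑ i : a, ∑ j : b, (X i j) ^ 2)

open Real
open scoped NNReal Matrix

lemma frobNorm_mul_le_of_forall_col {ι κ ν : Type} [Fintype ι] [Fintype κ] [Fintype ν]
    {A : Matrix ι κ ℝ} {X : Matrix κ ν ℝ} {C : ℝ} (hC : 0 ≤ C)
    (h : ∀ j, ∑ i, (A *ᵥ Xᵀ j) i ^ 2 ≤ C ^ 2 * ∑ k, X k j ^ 2) :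
    frobNorm (A * X) ≤ C * frobNorm X := by
  rw [frobNorm, frobNorm, ← sqrt_sq hC, ← sqrt_mul (sq_nonneg C)]
  refine sqrt_le_sqrt ?_
  rw [Finset.sum_comm, Finset.sum_comm (f := fun k j ↦ X k j ^ 2), Finset.mul_sum]
  exact Finset.sum_le_sum fun j _ ↦ h j

lemma MeasureTheory.ofReal_one_sub_le_measure {Ω : Type*} {mΩ : MeasurableSpace Ω}
    {μ : Measure Ω} [IsProbabilityMeasure μ] {s : Set Ω} {ε : ℝ} (hε : 0 ≤ ε)
    (h : μ sᶜ ≤ ENNReal.ofReal ε) : ENNReal.ofReal (1 - ε) ≤ μ s := by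
  rw [ENNReal.ofReal_sub _ hε, ENNReal.ofReal_one, tsub_le_iff_right]
  calc 1 = μ (s ∪ sᶜ) := by simp
    _ ≤ μ s + μ sᶜ := measure_union_le _ _
    _ ≤ μ s + ENNReal.ofReal ε := by gcongr

namespace ProbabilityTheory

variable {Ω : Type*} {mΩ : MeasurableSpace Ω} {μ : Measure Ω}

lemma iIndepFun.curry {ι κ 𝓧 : Type*} [Countable ι] [Countable κ] [MeasurableSpace 𝓧]
    {X : ι → κ → Ω → 𝓧} (mX : ∀ i j, AEMeasurable (X i j) μ)
    (h : iIndepFun (fun p : ι × κ ↦ X p.1 p.2) μ) :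
    iIndepFun (fun i ω j ↦ X i j ω) μ := by
  have := h.isProbabilityMeasure
  have : ∀ i j, IsProbabilityMeasure (μ.map (X i j)) :=
    fun i j ↦ Measure.isProbabilityMeasure_map (mX i j)
  have hrow : ∀ i, μ.map (fun ω j ↦ X i j ω) = Measure.infinitePi fun j ↦ μ.map (X i j) :=
    fun i ↦ (h.precomp (Prod.mk_right_injective i)).map_fun_eq_infinitePi_map₀' (mX i)
  rw [iIndepFun_iff_map_fun_eq_infinitePi_map₀' (fun i ↦ aemeasurable_pi_lambda _ (mX i))]
  simp_rw [hrow]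
  rw [← Measure.infinitePi_map_curry (fun i j ↦ μ.map (X i j)),
    ← (h.map_fun_eq_infinitePi_map₀' (fun p ↦ mX p.1 p.2) :
      _ = Measure.infinitePi fun p : ι × κ ↦ μ.map (X p.1 p.2)),
    AEMeasurable.map_map_of_aemeasurable (by fun_prop)
      (aemeasurable_pi_lambda (fun ω (p : ι × κ) ↦ X p.1 p.2 ω) fun p ↦ mX p.1 p.2)]
  rfl

lemma iIndepFun.map_fun_sum_eq_gaussianReal {ι : Type*} [Fintype ι] {X : ι → Ω → ℝ}
    {m : ι → ℝ} {v : ι → ℝ≥0} (hX : iIndepFun X μ)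
    (hlaw : ∀ i, μ.map (X i) = gaussianReal (m i) (v i)) :
    μ.map (fun ω ↦ ∑ i, X i ω) = gaussianReal (∑ i, m i) (∑ i, v i) := by
  have := hX.isProbabilityMeasure
  have mX : ∀ i, AEMeasurable (X i) μ := fun i ↦ .of_map_ne_zero (by simp [hlaw, NeZero.ne])
  have := Measure.isProbabilityMeasure_map (μ := μ) (f := fun ω ↦ ∑ i, X i ω) (by fun_prop)
  refine Measure.ext_of_charFun (funext fun t ↦ ?_)
  simp only [hX.charFun_map_fun_sum_eq_prod mX, Finset.prod_apply, hlaw, charFun_gaussianReal,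
    ← Complex.exp_sum]
  push_cast
  simp only [Finset.sum_sub_distrib, Finset.mul_sum, Finset.sum_mul, Finset.sum_div]

lemma mgf_sq_gaussianReal {v : ℝ≥0} {s : ℝ} (hsv : 2 * s * v < 1) :
    mgf (fun y ↦ y ^ 2) (gaussianReal 0 v) s = (√(1 - 2 * s * v))⁻¹ := by
  rcases eq_or_ne v 0 with rfl | hv
  · simp [gaussianReal_zero_var, mgf]
  have hpdf : ∀ y, gaussianPDFReal 0 v y * exp (s * y ^ 2)
      = (√(2 * π * v))⁻¹ * exp (-(1 / (2 * v) - s) * y ^ 2) := fun y ↦ by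
    rw [gaussianPDFReal, mul_assoc, ← exp_add]
    congr 2
    field_simp
    ring
  rw [mgf, integral_gaussianReal_eq_integral_smul hv]
  simp only [smul_eq_mul, hpdf, integral_const_mul, integral_gaussian]
  rw [← sqrt_inv, ← sqrt_inv, ← sqrt_mul (by positivity)]
  congr 1
  field_simp

lemma iIndepFun.measureReal_le_sum_sq_le {ι : Type*} [Fintype ι] {Y : ι → Ω → ℝ} {v : ℝ≥0}
    {s : ℝ} (hY : iIndepFun Y μ) (hlaw : ∀ i, μ.map (Y i) = gaussianReal 0 v) (hs : 0 ≤ s)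
    (hsv : 2 * s * v < 1) (a : ℝ) :
    μ.real {ω | a ≤ ∑ i, Y i ω ^ 2}
      ≤ exp (-s * a) * (√(1 - 2 * s * v))⁻¹ ^ Fintype.card ι := by
  have := hY.isProbabilityMeasure
  have mY : ∀ i, AEMeasurable (Y i) μ := fun i ↦ .of_map_ne_zero (by simp [hlaw, NeZero.ne])
  have hmgf_sum : mgf (fun ω ↦ ∑ i, Y i ω ^ 2) μ s = (√(1 - 2 * s * v))⁻¹ ^ Fintype.card ι := by
    have hsq : iIndepFun (fun i ω ↦ Y i ω ^ 2) μ :=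
      hY.comp (fun _ y ↦ y ^ 2) (fun _ ↦ by fun_prop)
    have hmgf : ∀ i, mgf (fun ω ↦ Y i ω ^ 2) μ s = (√(1 - 2 * s * v))⁻¹ := fun i ↦ by
      rw [← mgf_sq_gaussianReal hsv, ← hlaw i, mgf_map (mY i) (by fun_prop)]
      rfl
    simpa [Finset.sum_fn, hmgf] using hsq.mgf_sum₀ (t := s) (fun i ↦ (mY i).pow_const 2) .univ
  have hint : Integrable (fun ω ↦ exp (s * ∑ i, Y i ω ^ 2)) μ := by
    have : 0 < 1 - 2 * s * v := by linarith
    rw [← mgf_pos_iff, hmgf_sum]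
    positivity
  simpa [hmgf_sum] using measure_ge_le_exp_mul_mgf a hs hint

lemma inv_sqrt_three_quarters_le_exp : (√(3 / 4))⁻¹ ≤ exp (17 / 64) := by
  rw [← sqrt_inv, sqrt_le_iff, ← exp_nat_mul]
  refine ⟨(exp_pos _).le, ?_⟩
  have := add_one_le_exp ((2 : ℕ) * (17 / 64) : ℝ)
  norm_num at this ⊢
  linarith

lemma iIndepFun.measure_nine_div_four_mul_le_sum_sq_le {ι : Type*} [Fintype ι]
    {Y : ι → Ω → ℝ} {w : ℝ≥0} (hw : w ≠ 0) (hY : iIndepFun Y μ)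
    (hlaw : ∀ i, μ.map (Y i) = gaussianReal 0 w) :
    μ {ω | 9 / 4 * (Fintype.card ι * w) ≤ ∑ i, Y i ω ^ 2}
      ≤ ENNReal.ofReal (exp (-(Fintype.card ι) / 64)) := by
  have := hY.isProbabilityMeasure
  have hsw : 2 * (1 / (8 * w)) * (w : ℝ) = 1 / 4 := by
    field_simp
    norm_num
  rw [← ofReal_measureReal (measure_ne_top _ _)]
  refine ENNReal.ofReal_le_ofReal ((hY.measureReal_le_sum_sq_le hlaw (s := 1 / (8 * w))
    (by positivity) (by rw [hsw]; norm_num) _).trans ?_)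
  calc _ = exp (-(9 / 32) * Fintype.card ι) * (√(3 / 4))⁻¹ ^ Fintype.card ι := by
        rw [hsw]
        congr 2
        · field_simp
          ring
        · norm_num
    _ ≤ exp (-(9 / 32) * Fintype.card ι) * exp (17 / 64) ^ Fintype.card ι := by
        gcongr
        exact inv_sqrt_three_quarters_le_exp
    _ = exp (-(Fintype.card ι) / 64) := by
        rw [← exp_nat_mul, ← exp_add]
        ring_nf

section Matrix

variable {ι κ : Type*} [Fintype κ]

lemma iIndepFun.map_mulVec_eq_gaussianReal {P : Ω → Matrix ι κ ℝ} {v : ℝ≥0}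
    (hindep : iIndepFun (fun p : ι × κ ↦ fun ω ↦ P ω p.1 p.2) μ)
    (hgauss : ∀ i k, μ.map (fun ω ↦ P ω i k) = gaussianReal 0 v) (x : κ → ℝ) (i : ι) :
    μ.map (fun ω ↦ (P ω *ᵥ x) i) = gaussianReal 0 (∑ k, .mk (x k ^ 2) (sq_nonneg _) * v) := by
  have mP : ∀ i k, AEMeasurable (fun ω ↦ P ω i k) μ :=
    fun i k ↦ .of_map_ne_zero (by simp [hgauss, NeZero.ne])
  have hrow : iIndepFun (fun k ω ↦ P ω i k * x k) μ :=
    (hindep.precomp (Prod.mk_right_injective i)).comp (fun k y ↦ y * x k) (fun _ ↦ by fun_prop)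
  have hlaw : ∀ k, μ.map (fun ω ↦ P ω i k * x k)
      = gaussianReal 0 (.mk (x k ^ 2) (sq_nonneg _) * v) := fun k ↦ by
    change μ.map ((· * x k) ∘ fun ω ↦ P ω i k) = _
    rw [← AEMeasurable.map_map_of_aemeasurable (by fun_prop) (mP i k), hgauss,
      gaussianReal_map_mul_const, mul_zero]
  simpa [Matrix.mulVec, dotProduct] using hrow.map_fun_sum_eq_gaussianReal hlaw

lemma measure_lt_sum_sq_mulVec_le [Fintype ι] {P : Ω → Matrix ι κ ℝ} {v : ℝ≥0} (hv : v ≠ 0)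
    (hindep : iIndepFun (fun p : ι × κ ↦ fun ω ↦ P ω p.1 p.2) μ)
    (hgauss : ∀ i k, μ.map (fun ω ↦ P ω i k) = gaussianReal 0 v) (x : κ → ℝ) :
    μ {ω | 9 / 4 * (Fintype.card ι * v * ∑ k, x k ^ 2) < ∑ i, (P ω *ᵥ x) i ^ 2}
      ≤ ENNReal.ofReal (exp (-(Fintype.card ι) / 64)) := by
  have mP : ∀ i k, AEMeasurable (fun ω ↦ P ω i k) μ :=
    fun i k ↦ .of_map_ne_zero (by simp [hgauss, NeZero.ne])
  rcases eq_or_ne x 0 with rfl | hx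
  · simp
  set w : ℝ≥0 := ∑ k, .mk (x k ^ 2) (sq_nonneg _) * v with hw_def
  have hw : (w : ℝ) = v * ∑ k, x k ^ 2 := by
    simp [hw_def, Finset.mul_sum, mul_comm]
  have hw0 : w ≠ 0 := by
    have : (0 : ℝ) < ∑ k, x k ^ 2 := by
      obtain ⟨k, hk : x k ≠ 0⟩ := Function.ne_iff.mp hx
      exact Finset.sum_pos' (fun k _ ↦ sq_nonneg _) ⟨k, Finset.mem_univ k, by positivity⟩
    rw [← NNReal.coe_ne_zero, hw]
    positivity
  have hrows : iIndepFun (fun i ω ↦ (P ω *ᵥ x) i) μ :=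
    (hindep.curry mP).comp (fun _ r ↦ ∑ k, r k * x k) (fun _ ↦ by fun_prop)
  refine (measure_mono fun ω hω ↦ ?_).trans
    (hrows.measure_nine_div_four_mul_le_sum_sq_le hw0
      (hindep.map_mulVec_eq_gaussianReal hgauss x))
  have : 9 / 4 * (Fintype.card ι * (w : ℝ)) = 9 / 4 * (Fintype.card ι * v * ∑ k, x k ^ 2) := by
    rw [hw]
    ring
  exact this.trans_le (le_of_lt hω)

end Matrix

lemma measure_compl_frobNorm_mul_le {ι κ ν : Type} [Fintype ι] [Nonempty ι] [Fintype κ]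
    [Fintype ν] {P : Ω → Matrix ι κ ℝ}
    (hindep : iIndepFun (fun p : ι × κ ↦ fun ω ↦ P ω p.1 p.2) μ)
    (hgauss : ∀ i k, μ.map (fun ω ↦ P ω i k) = gaussianReal 0 (Fintype.card ι : ℝ≥0)⁻¹)
    (X : Matrix κ ν ℝ) :
    μ {ω | frobNorm (P ω * X) ≤ 3 / 2 * frobNorm X}ᶜ
      ≤ ENNReal.ofReal (Fintype.card ν * exp (-(Fintype.card ι) / 64)) := by
  have hcard : (Fintype.card ι : ℝ) ≠ 0 := by positivity
  calc μ {ω | frobNorm (P ω * X) ≤ 3 / 2 * frobNorm X}ᶜ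
      ≤ μ (⋃ j, {ω | 9 / 4 * ∑ k, X k j ^ 2 < ∑ i, (P ω *ᵥ Xᵀ j) i ^ 2}) := by
        refine measure_mono fun ω hω ↦ ?_
        contrapose! hω
        simp only [Set.mem_iUnion, not_exists, Set.mem_ofPred_eq, not_lt] at hω
        rw [Set.notMem_compl_iff, Set.mem_ofPred_eq]
        exact frobNorm_mul_le_of_forall_col (by norm_num) fun j ↦ (hω j).trans_eq (by norm_num)
    _ ≤ ∑ j, μ {ω | 9 / 4 * ∑ k, X k j ^ 2 < ∑ i, (P ω *ᵥ Xᵀ j) i ^ 2} :=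
        measure_iUnion_fintype_le _ _
    _ ≤ ∑ _j : ν, ENNReal.ofReal (exp (-(Fintype.card ι) / 64)) := Finset.sum_le_sum fun j _ ↦ by
        simpa [hcard] using measure_lt_sum_sq_mulVec_le (by simp) hindep hgauss (Xᵀ j)
    _ = ENNReal.ofReal (Fintype.card ν * exp (-(Fintype.card ι) / 64)) := by
        simp [ENNReal.ofReal_mul]

end ProbabilityTheory

/-- Let `n ≥ 2`, `0 < δ < 1`, `m ≥ 64·ln(2n/δ)`, and let `M, M'` be real
`d×c` matrices with `c ≤ n/4` columns. If `P` is a random `m×d` matrix with i.i.d. Gaussian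
entries of mean 0 and variance `1/m`, then with probability at least `1 − δ/4`,
`‖P·M − P·M'‖_F ≤ (3/2)·‖M − M'‖_F`. -/
theorem jl_frobenius_sensitivity (n : ℕ) (hn : 2 ≤ n) (δ : ℝ) (hδ0 : 0 < δ) (hδ1 : δ < 1)
    (m d c : ℕ) (hm : 64 * Real.log (2 * (n : ℝ) / δ) ≤ (m : ℝ)) (hc : (c : ℝ) ≤ (n : ℝ) / 4)
    (M M' : Matrix (Fin d) (Fin c) ℝ)
    (Ω : Type) (mΩ : MeasurableSpace Ω) (μ : Measure Ω) (hμ : IsProbabilityMeasure μ)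
    (P : Ω → Matrix (Fin m) (Fin d) ℝ)
    (hindep : iIndepFun
      (fun ij : Fin m × Fin d => fun ω => P ω ij.1 ij.2) μ)
    (hgauss : ∀ i j, Measure.map (fun ω => P ω i j) μ = gaussianReal 0 (m : NNReal)⁻¹) :
    ENNReal.ofReal (1 - δ / 4) ≤
      μ {ω | frobNorm (P ω * M - P ω * M') ≤ 3 / 2 * frobNorm (M - M')} := by
  have hm0 : 0 < m := by
    have : 1 < 2 * (n : ℝ) / δ := by
      rw [one_lt_div hδ0]
      linarith [(Nat.ofNat_le_cast.mpr hn : (2 : ℝ) ≤ n)]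
    exact_mod_cast (by linarith [log_pos this] : (0 : ℝ) < m)
  have hsmall : (c : ℝ) * exp (-(m : ℝ) / 64) ≤ δ / 4 := by
    have hexp : exp (-(m : ℝ) / 64) ≤ δ / (2 * n) := by
      calc exp (-(m : ℝ) / 64) ≤ exp (-log (2 * n / δ)) := exp_le_exp.mpr (by linarith)
        _ = δ / (2 * n) := by rw [exp_neg, exp_log (by positivity), inv_div]
    calc (c : ℝ) * exp (-(m : ℝ) / 64) ≤ n / 4 * (δ / (2 * n)) := by gcongr
      _ ≤ δ / 4 := by
        field_simp
        linarith
  have : NeZero m := ⟨hm0.ne'⟩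
  have hbad := measure_compl_frobNorm_mul_le hindep (by simpa using hgauss) (M - M')
  rw [Fintype.card_fin, Fintype.card_fin] at hbad
  simp_rw [← Matrix.mul_sub]
  exact ofReal_one_sub_le_measure (by positivity) (hbad.trans (ENNReal.ofReal_le_ofReal hsmall))
end

section
/- Let A be a randomized algorithm mapping each weighted graph on V (|V| = n) to a probability distribution over binary trees with leaf set V, satisfying ε-edge differential privacy. Let d be a positive integer and let G₁,…,G_N be weighted graphs on V such that Σ over unordered pairs {u,v} of |w_i(u,v) − w_j(u,v)| ≤ d for all i, j. Let S₁,…,S_N be pairwise disjoint sets of binary trees with leaf set V such that Pr[A(G_i) ∈ S_i] ≥ p > 0 for every i. Then N ≤ e^{d·ε}/p. -/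
open Finset

/-!
Interpolating linearly between two weightings at distance at most `d` gives `d` steps, each
between weightings at distance at most `1`; chaining the privacy guarantee along them yields
group privacy, `Pr[A(Gᵢ) ∈ S] ≤ e^{dε} Pr[A(G₀) ∈ S]`. Hence every `Sᵢ` has mass at least
`e^{-dε} p` under the single distribution `A(G₀)`, and disjointness bounds the total by `1`.
-/

theorem le_pow_mul_of_le_mul_succ {M : Type*} [CommMonoid M] [Preorder M] [MulLeftMono M]
    {f : ℕ → M} {c : M} {n : ℕ} (h : ∀ k < n, f (k + 1) ≤ c * f k) : f n ≤ c ^ n * f 0 := by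
  induction n with
  | zero => simp
  | succ n ih =>
    calc f (n + 1) ≤ c * f n := h n n.lt_succ_self
      _ ≤ c * (c ^ n * f 0) := mul_le_mul_right (ih fun k hk => h k (hk.trans n.lt_succ_self)) c
      _ = c ^ (n + 1) * f 0 := by rw [pow_succ', mul_assoc]

theorem PMF.toOuterMeasure_biUnion_finset {α ι : Type*} (q : PMF α) (s : Finset ι)
    (t : ι → Set α) (ht : (s : Set ι).PairwiseDisjoint t) :
    q.toOuterMeasure (⋃ i ∈ s, t i) = ∑ i ∈ s, q.toOuterMeasure (t i) := by
  simp_rw [PMF.toOuterMeasure_apply, Finset.indicator_biUnion_apply s t ht]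
  exact Summable.tsum_finsetSum fun _ _ => ENNReal.summable

theorem PMF.sum_toOuterMeasure_le_one {α ι : Type*} (q : PMF α) (s : Finset ι)
    (t : ι → Set α) (ht : (s : Set ι).PairwiseDisjoint t) :
    ∑ i ∈ s, q.toOuterMeasure (t i) ≤ 1 := by
  rw [← q.toOuterMeasure_biUnion_finset s t ht,
    ← (q.toOuterMeasure_apply_eq_one_iff Set.univ).2 (Set.subset_univ _)]
  exact q.toOuterMeasure.mono (Set.subset_univ _)

section GroupPrivacy

variable {V : Type} [Fintype V]

def lineWeight (w w' : V → V → ℝ) (t : ℝ) : V → V → ℝ :=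
  fun u v => (1 - t) * w u v + t * w' u v

theorem graphDist_lineWeight (w w' : V → V → ℝ) (s t : ℝ) :
    graphDist (lineWeight w w' s) (lineWeight w w' t) = |t - s| * graphDist w w' := by
  have h : ∀ u v, |lineWeight w w' s u v - lineWeight w w' t u v| = |t - s| * |w u v - w' u v| :=
    fun u v => by rw [lineWeight, lineWeight, ← abs_mul]; ring_nf
  simp_rw [graphDist, h, ← Finset.mul_sum]
  ring

omit [Fintype V] in
theorem IsWeight.lineWeight {w w' : V → V → ℝ} (hw : IsWeight w) (hw' : IsWeight w') {t : ℝ}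
    (ht₀ : 0 ≤ t) (ht₁ : t ≤ 1) : IsWeight (lineWeight w w' t) := by
  obtain ⟨hw_nonneg, hw_symm, hw_diag⟩ := hw
  obtain ⟨hw'_nonneg, hw'_symm, hw'_diag⟩ := hw'
  refine ⟨fun u v => ?_, fun u v => ?_, fun u => ?_⟩ <;> simp only [_root_.lineWeight]
  · exact add_nonneg (mul_nonneg (sub_nonneg.2 ht₁) (hw_nonneg u v))
      (mul_nonneg ht₀ (hw'_nonneg u v))
  · rw [hw_symm, hw'_symm]
  · rw [hw_diag, hw'_diag, mul_zero, mul_zero, add_zero]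

theorem IsEdgeDP.group {A : (V → V → ℝ) → PMF (BTree V)} {ε : ℝ} (hDP : IsEdgeDP A ε)
    {d : ℕ} (hd : 1 ≤ d) {w w' : V → V → ℝ} (hw : IsWeight w) (hw' : IsWeight w')
    (hdist : graphDist w w' ≤ d) (S : Set (BTree V)) :
    (A w').toOuterMeasure S ≤ ENNReal.ofReal (Real.exp (d * ε)) * (A w).toOuterMeasure S := by
  have hd₀ : (0 : ℝ) < d := by exact_mod_cast hd
  let path : ℕ → V → V → ℝ := fun k => lineWeight w w' (k / d)
  have path_isWeight : ∀ k ≤ d, IsWeight (path k) := fun k hk =>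
    hw.lineWeight hw' (by positivity) ((div_le_one hd₀).2 (by exact_mod_cast hk))
  have path_step : ∀ k < d, graphDist (path k) (path (k + 1)) ≤ 1 := fun k _ => by
    rw [graphDist_lineWeight, Nat.cast_succ, add_div, add_sub_cancel_left,
      abs_of_pos (by positivity), one_div_mul_eq_div, div_le_one hd₀]
    exact hdist
  have hpath := le_pow_mul_of_le_mul_succ (f := fun k => (A (path k)).toOuterMeasure S)
    (n := d) fun k hk =>
      hDP _ _ (path_isWeight k hk.le) (path_isWeight (k + 1) hk) (path_step k hk) S
  have path_zero : path 0 = w := by funext u v; simp [path, lineWeight]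
  have path_last : path d = w' := by funext u v; simp [path, lineWeight, hd₀.ne']
  rwa [path_zero, path_last, ← ENNReal.ofReal_pow (Real.exp_nonneg ε), ← Real.exp_nat_mul]
    at hpath

end GroupPrivacy

theorem dp_packing_bound_general (V : Type) [Fintype V] (ε : ℝ)
    (A : (V → V → ℝ) → PMF (BTree V))
    (hDP : IsEdgeDP A ε)
    (N : ℕ) (d : ℕ) (hd : 1 ≤ d)
    (G : Fin N → V → V → ℝ) (hG : ∀ i, IsWeight (G i))
    (hdist : ∀ i j : Fin N, graphDist (G i) (G j) ≤ (d : ℝ))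
    (S : Fin N → Set (BTree V)) (hdisj : ∀ i j : Fin N, i ≠ j → Disjoint (S i) (S j))
    (p : ℝ) (hp : 0 < p)
    (hmass : ∀ i : Fin N, ENNReal.ofReal p ≤ (A (G i)).toOuterMeasure (S i)) :
    (N : ℝ) ≤ Real.exp ((d : ℝ) * ε) / p := by
  rcases N.eq_zero_or_pos with rfl | hN
  · rw [Nat.cast_zero]
    positivity
  let i₀ : Fin N := ⟨0, hN⟩
  set C := ENNReal.ofReal (Real.exp (d * ε))
  have hsum : (N : ENNReal) * ENNReal.ofReal p ≤ C :=
    calc (N : ENNReal) * ENNReal.ofReal p = ∑ _i : Fin N, ENNReal.ofReal p := by simp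
      _ ≤ ∑ i, C * (A (G i₀)).toOuterMeasure (S i) := Finset.sum_le_sum fun i _ =>
          (hmass i).trans (hDP.group hd (hG i₀) (hG i) (hdist i₀ i) (S i))
      _ = C * ∑ i, (A (G i₀)).toOuterMeasure (S i) := by rw [Finset.mul_sum]
      _ ≤ C := mul_le_of_le_one_right' ((A (G i₀)).sum_toOuterMeasure_le_one _ S
          fun i _ j _ hij => hdisj i j hij)
  rw [le_div_iff₀ hp, ← ENNReal.ofReal_le_ofReal_iff (Real.exp_nonneg _),
    ENNReal.ofReal_mul (Nat.cast_nonneg N), ENNReal.ofReal_natCast]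
  exact hsum

/-- Packing bound for `ε`-edge-DP hierarchical clustering: if weighted
graphs `G₁,…,G_N` are pairwise within `L₁`-distance `d` of each other, the tree sets
`S₁,…,S_N` are pairwise disjoint, and `Pr[A(G_i) ∈ S_i] ≥ p > 0` for all `i`, then
`N ≤ e^{d·ε}/p`. -/
theorem dp_packing_bound (V : Type) [Fintype V] [DecidableEq V] (ε : ℝ)
    (A : (V → V → ℝ) → PMF (BTree V))
    (hsupp : ∀ w : V → V → ℝ, IsWeight w → ∀ T ∈ (A w).support, IsHC T)
    (hDP : IsEdgeDP A ε)
    (N : ℕ) (d : ℕ) (hd : 1 ≤ d)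
    (G : Fin N → V → V → ℝ) (hG : ∀ i, IsWeight (G i))
    (hdist : ∀ i j : Fin N, graphDist (G i) (G j) ≤ (d : ℝ))
    (S : Fin N → Set (BTree V)) (hdisj : ∀ i j : Fin N, i ≠ j → Disjoint (S i) (S j))
    (p : ℝ) (hp : 0 < p)
    (hmass : ∀ i : Fin N, ENNReal.ofReal p ≤ (A (G i)).toOuterMeasure (S i)) :
    (N : ℝ) ≤ Real.exp ((d : ℝ) * ε) / p :=
  dp_packing_bound_general V ε A hDP N d hd G hG hdist S hdisj p hp hmass
end
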